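/- arXiv:1507.06749 — 6 statements merged into one kernel-verified Lean document; each statement's English description precedes it below -/
import Mathlib

section
/- A finite simple graph G is word-representable if and only if G admits a semi-transitive orientation. -/
/-- Two letters `x ≠ y` alternate in the word `w` if, after deleting all other letters,
consecutive letters are always distinct (i.e. the result is `xyxy...` or `yxyx...`). -/
def Alternate {V : Type*} [DecidableEq V] (w : List V) (x y : V) : Prop :=
  (w.filter (fun z => z = x ∨ z = y)).Chain' (· ≠ ·)

/-- A graph is word-representable if some word over its vertex alphabet, containing every
vertex, is such that two distinct letters alternate iff they are adjacent. -/
def WordRepresentable {V : Type*} [DecidableEq V] (G : SimpleGraph V) : Prop :=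
  ∃ w : List V, (∀ v : V, v ∈ w) ∧ ∀ x y : V, x ≠ y → (Alternate w x y ↔ G.Adj x y)

/-- `D` is an orientation of `G`: each edge gets exactly one direction. -/
def IsOrientation {V : Type*} (G : SimpleGraph V) (D : V → V → Prop) : Prop :=
  (∀ x y, D x y → ¬ D y x) ∧ (∀ x y, G.Adj x y ↔ (D x y ∨ D y x))

/-- A digraph is acyclic: no directed cycle. -/
def DigraphAcyclic {V : Type*} (D : V → V → Prop) : Prop :=
  ∀ v, ¬ Relation.TransGen D v v

/-- For every directed path `v 0 → v 1 → ... → v k`, if the arc `v 0 → v k` is present then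
all arcs `v i → v j` for `i < j` are present. -/
def ShortcutFree {V : Type*} (D : V → V → Prop) : Prop :=
  ∀ (k : ℕ) (v : Fin (k + 1) → V),
    (∀ i : Fin k, D (v i.castSucc) (v i.succ)) →
    D (v 0) (v (Fin.last k)) →
    ∀ i j : Fin (k + 1), i < j → D (v i) (v j)

/-- A semi-transitive orientation is acyclic and shortcut-free. -/
def SemiTransitive {V : Type*} (D : V → V → Prop) : Prop :=
  DigraphAcyclic D ∧ ShortcutFree D

/-!
If `w` represents `G`, orient every edge from the letter that occurs first in `w`. Along a
directed path first occurrences increase and prefix counts decrease; an arc `v₀ → vₖ` then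
squeezes the prefix counts of all vertices of the path into a window of width one, so every two
of them alternate and are joined by an arc: the orientation is acyclic and shortcut-free.

Conversely, fix a topological order of a semi-transitive orientation and build the word from
blocks, each a concatenation of restrictions of that order to vertex sets, in which all vertices
occur equally often and every arc `p → q` keeps `#p - #q ∈ {0, 1}` on every prefix; such blocks
can be concatenated without breaking the alternation of any arc. A non-adjacent pair `x, y` is
separated by the block listing the ancestors of `y` first, unless there is a path `x ⇝ y`; then it
is separated by a block in which `x` occurs twice before `y`. That block respects the arcs because
no arc joins an ancestor of `x` to a descendant of `y`: this is where semi-transitivity is used.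
-/

open List Relation

section
variable {V : Type*}

lemma prefix_append_cases {t A B : List V} (h : t <+: A ++ B) :
    t <+: A ∨ ∃ s, s <+: B ∧ t = A ++ s := by
  rcases prefix_or_prefix_of_prefix h (prefix_append A B) with h' | ⟨s, rfl⟩
  · exact Or.inl h'
  · exact Or.inr ⟨s, (prefix_append_right_inj A).1 h, rfl⟩

section Leads
variable [DecidableEq V]

def countGap (x y : V) (l : List V) : ℤ := l.count x - l.count y

@[simp] lemma countGap_nil (x y : V) : countGap x y [] = 0 := by simp [countGap]

@[simp] lemma countGap_append (x y : V) (l₁ l₂ : List V) :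
    countGap x y (l₁ ++ l₂) = countGap x y l₁ + countGap x y l₂ := by
  simp only [countGap, count_append]; push_cast; ring

lemma countGap_swap (x y : V) (l : List V) : countGap x y l = -countGap y x l := by
  simp [countGap]

/-- The occurrences of `x` and `y` in `w` interleave, `x` having a head start of `c` on every
prefix; `c = 0` means the interleaving starts with `x`, `c = 1` that it starts with `y`. -/
def Leads (c : ℤ) (w : List V) (x y : V) : Prop :=
  ∀ t, t <+: w → 0 ≤ c + countGap x y t ∧ c + countGap x y t ≤ 1

lemma Leads.bounds {c : ℤ} {w : List V} {x y : V} (h : Leads c w x y) : 0 ≤ c ∧ c ≤ 1 := by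
  simpa using h [] nil_prefix

lemma leads_nil {c : ℤ} {x y : V} : Leads c [] x y ↔ 0 ≤ c ∧ c ≤ 1 :=
  ⟨Leads.bounds, fun h t ht => by simpa [prefix_nil.1 ht] using h⟩

lemma leads_append {c : ℤ} {A B : List V} {x y : V} :
    Leads c (A ++ B) x y ↔ Leads c A x y ∧ Leads (c + countGap x y A) B x y := by
  refine ⟨fun h => ⟨fun t ht => h t (ht.trans (prefix_append A B)), fun s hs => ?_⟩, ?_⟩
  · simpa [add_assoc] using h (A ++ s) ((prefix_append_right_inj A).2 hs)
  · rintro ⟨hA, hB⟩ t ht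
    rcases prefix_append_cases ht with ht | ⟨s, hs, rfl⟩
    · exact hA t ht
    · simpa [add_assoc] using hB s hs

lemma leads_cons {c : ℤ} {a : V} {w : List V} {x y : V} :
    Leads c (a :: w) x y ↔ (0 ≤ c ∧ c ≤ 1) ∧ Leads (c + countGap x y [a]) w x y := by
  rw [← singleton_append, leads_append]
  refine and_congr_left fun h => ⟨Leads.bounds, fun hc t ht => ?_⟩
  rcases prefix_cons_iff.1 ht with rfl | ⟨_, rfl, hnil⟩
  · simpa using hc
  · obtain rfl := prefix_nil.1 hnil
    simpa using h.bounds

lemma leads_cons_of_ne {c : ℤ} {a : V} {w : List V} {x y : V} (hax : a ≠ x) (hay : a ≠ y) :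
    Leads c (a :: w) x y ↔ Leads c w x y := by
  simp only [leads_cons, countGap, count_singleton, beq_iff_eq, hax, hay, if_false,
    Nat.cast_zero, sub_self, add_zero]
  exact ⟨And.right, fun h => ⟨h.bounds, by simpa using h⟩⟩

lemma leads_one_iff {w : List V} {x y : V} : Leads 1 w x y ↔ Leads 0 w y x := by
  refine forall₂_congr fun t _ => ?_
  simp only [countGap]
  omega

lemma isChain_cons_filter_iff {x y : V} (hxy : x ≠ y) (w : List V) :
    (List.IsChain (· ≠ ·) (y :: w.filter (fun z => z = x ∨ z = y)) ↔ Leads 0 w x y) ∧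
    (List.IsChain (· ≠ ·) (x :: w.filter (fun z => z = x ∨ z = y)) ↔ Leads 1 w x y) := by
  induction w with
  | nil => simp [leads_nil]
  | cons a w ih =>
    by_cases hax : a = x
    · subst hax
      have hnot : ¬ Leads 2 w a y := fun h => by simpa using h.bounds
      rw [filter_cons_of_pos (by simp), isChain_cons_cons, isChain_cons_cons, ih.2]
      simp [leads_cons, countGap, hxy, hxy.symm, hnot]
    · by_cases hay : a = y
      · subst hay
        have hnot : ¬ Leads (-1) w x a := fun h => by simpa using h.bounds
        rw [filter_cons_of_pos (by simp), isChain_cons_cons, isChain_cons_cons, ih.1]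
        simp [leads_cons, countGap, hxy, hax, hnot]
      · rw [filter_cons_of_neg (by simp [hax, hay]), leads_cons_of_ne hax hay,
          leads_cons_of_ne hax hay]
        exact ih

lemma alternate_iff_leads {x y : V} (hxy : x ≠ y) (w : List V) :
    Alternate w x y ↔ Leads 0 w x y ∨ Leads 0 w y x := by
  rw [← leads_one_iff (x := x), ← (isChain_cons_filter_iff hxy w).1,
    ← (isChain_cons_filter_iff hxy w).2]
  show List.IsChain _ _ ↔ _
  generalize hf : w.filter (fun z => z = x ∨ z = y) = f
  cases f with
  | nil => simp
  | cons b f =>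
    have hb : b ∈ w.filter (fun z => z = x ∨ z = y) := hf ▸ mem_cons_self
    rcases (by simpa using hb : b ∈ w ∧ (b = x ∨ b = y)).2 with rfl | rfl <;>
      simp [isChain_cons_cons, hxy, hxy.symm]

lemma countGap_flatten {L : List (List V)} {x y : V} (h : ∀ B ∈ L, countGap x y B = 0) :
    countGap x y L.flatten = 0 := by
  induction L with
  | nil => simp
  | cons B L ih => simp [h B mem_cons_self, ih fun B' hB' => h B' (mem_cons_of_mem _ hB')]

lemma leads_flatten {L : List (List V)} {x y : V} (hbal : ∀ B ∈ L, countGap x y B = 0)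
    (h : ∀ B ∈ L, Leads 0 B x y) : Leads 0 L.flatten x y := by
  induction L with
  | nil => simp [leads_nil]
  | cons B L ih =>
    rw [flatten_cons, leads_append, hbal B mem_cons_self, add_zero]
    exact ⟨h B mem_cons_self, ih (fun B' hB' => hbal B' (mem_cons_of_mem _ hB'))
      fun B' hB' => h B' (mem_cons_of_mem _ hB')⟩

lemma exists_prefix_flatten {L : List (List V)} {x y : V} (hbal : ∀ B ∈ L, countGap x y B = 0)
    {B t : List V} (hB : B ∈ L) (ht : t <+: B) :
    ∃ t', t' <+: L.flatten ∧ countGap x y t' = countGap x y t := by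
  obtain ⟨L₁, L₂, rfl⟩ := mem_iff_append.1 hB
  refine ⟨L₁.flatten ++ t, ?_, ?_⟩
  · simpa [flatten_append] using ht.trans (prefix_append B L₂.flatten)
  · rw [countGap_append, countGap_flatten fun B' hB' => hbal B' (by simp [hB']), zero_add]

end Leads

lemma digraphAcyclic_of_lt_comp {D : V → V → Prop} (f : V → ℕ)
    (hf : ∀ a b, D a b → f a < f b) :
    DigraphAcyclic D := by
  intro v hv
  have : TransGen (· < ·) (f v) (f v) := TransGen.lift f hf v v hv
  rw [transGen_eq_self] at this
  exact lt_irrefl _ this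

section Forward
variable [DecidableEq V] {G : SimpleGraph V} {w : List V}

lemma Leads.idxOf_lt {x y : V} (h : Leads 0 w x y) (hx : x ∈ w) (hxy : x ≠ y) :
    w.idxOf x < w.idxOf y := by
  induction w with
  | nil => simp at hx
  | cons a w ih =>
    by_cases hax : a = x
    · subst hax
      rw [idxOf_cons_self, idxOf_cons_ne _ hxy]
      exact Nat.succ_pos _
    · by_cases hay : a = y
      · subst hay
        have := (leads_cons.1 h).2.bounds
        simp [countGap, hax] at this
      · rw [idxOf_cons_ne _ hax, idxOf_cons_ne _ hay]
        exact Nat.succ_lt_succ <|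
          ih ((leads_cons_of_ne hax hay).1 h) ((mem_cons.1 hx).resolve_left (Ne.symm hax))

def wordOrientation (G : SimpleGraph V) (w : List V) (x y : V) : Prop :=
  G.Adj x y ∧ Leads 0 w x y

lemma wordOrientation.idxOf_lt (hall : ∀ v, v ∈ w) {x y : V} (h : wordOrientation G w x y) :
    w.idxOf x < w.idxOf y :=
  h.2.idxOf_lt (hall x) h.1.ne

lemma isOrientation_wordOrientation (hall : ∀ v, v ∈ w)
    (hrep : ∀ x y, x ≠ y → (Alternate w x y ↔ G.Adj x y)) :
    IsOrientation G (wordOrientation G w) := by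
  refine ⟨fun x y h h' => (h.idxOf_lt hall).asymm (h'.idxOf_lt hall),
    fun x y => ⟨fun hxy => ?_, ?_⟩⟩
  · rcases (alternate_iff_leads hxy.ne w).1 ((hrep x y hxy.ne).2 hxy) with h | h
    exacts [Or.inl ⟨hxy, h⟩, Or.inr ⟨hxy.symm, h⟩]
  · rintro (⟨h, -⟩ | ⟨h, -⟩)
    exacts [h, h.symm]

lemma shortcutFree_wordOrientation (hall : ∀ v, v ∈ w)
    (hrep : ∀ x y, x ≠ y → (Alternate w x y ↔ G.Adj x y)) :
    ShortcutFree (wordOrientation G w) := by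
  intro k v harc hlast i j hij
  have hidx_mono : StrictMono fun i => w.idxOf (v i) :=
    Fin.strictMono_iff_lt_succ.2 fun i => (harc i).idxOf_lt hall
  have hcount_anti : ∀ t, t <+: w → Antitone fun i => (t.count (v i) : ℤ) :=
    fun t ht => Fin.antitone_iff_succ_le.2 fun i => by
      have := ((harc i).2 t ht).1
      simp only [countGap] at this
      omega
  have hne : v i ≠ v j := fun h => (hidx_mono hij).ne (congrArg w.idxOf h)
  have hlead : Leads 0 w (v i) (v j) := fun t ht => by
    have hij' : (t.count (v j) : ℤ) ≤ t.count (v i) := hcount_anti t ht hij.le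
    have h0i : (t.count (v i) : ℤ) ≤ t.count (v 0) := hcount_anti t ht (Fin.zero_le i)
    have hjk : (t.count (v (Fin.last k)) : ℤ) ≤ t.count (v j) :=
      hcount_anti t ht (Fin.le_last j)
    have h0k := (hlast.2 t ht).2
    simp only [countGap] at h0k ⊢
    omega
  exact ⟨(hrep _ _ hne).1 ((alternate_iff_leads hne w).2 (Or.inl hlead)), hlead⟩

theorem WordRepresentable.exists_semiTransitive_orientation (hG : WordRepresentable G) :
    ∃ D : V → V → Prop, IsOrientation G D ∧ SemiTransitive D := by
  obtain ⟨w, hall, hrep⟩ := hG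
  exact ⟨wordOrientation G w, isOrientation_wordOrientation hall hrep,
    digraphAcyclic_of_lt_comp w.idxOf (fun _ _ h => h.idxOf_lt hall),
    shortcutFree_wordOrientation hall hrep⟩

end Forward

section ShortcutFree
variable {D : V → V → Prop}

lemma ShortcutFree.pairwise_of_isChain (hsf : ShortcutFree D) {l : List V} (hc : l.IsChain D)
    (hends : ∀ a ∈ l.head?, ∀ b ∈ l.getLast?, D a b) : l.Pairwise D := by
  cases l with
  | nil => exact Pairwise.nil
  | cons a l =>
    rw [pairwise_iff_get]
    refine hsf l.length (a :: l).get (fun i => ?_) ?_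
    · have := isChain_iff_getElem.1 hc i (by simp)
      simpa using this
    · simpa [getLast?_eq_some_getLast, getLast_eq_getElem] using hends

lemma exists_isChain_of_reflTransGen {a b : V} (h : ReflTransGen D a b) :
    ∃ l, (a :: l).IsChain D ∧ (a :: l).getLast? = some b := by
  obtain ⟨l, hc, hl⟩ := exists_isChain_cons_of_relationReflTransGen h
  exact ⟨l, hc, by rw [getLast?_eq_some_getLast (cons_ne_nil a l), hl]⟩

lemma ShortcutFree.rel_of_path (hsf : ShortcutFree D) {p x u q : V} (hpx : ReflTransGen D p x)
    (hxu : TransGen D x u) (huq : ReflTransGen D u q) (hpq : D p q) : D x u := by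
  obtain ⟨l₁, hc₁, hl₁⟩ := exists_isChain_of_reflTransGen hpx
  obtain ⟨y, hxy, hyu⟩ := TransGen.head'_iff.1 hxu
  obtain ⟨l₂, hc₂, hl₂⟩ := exists_isChain_of_reflTransGen hyu
  obtain ⟨l₃, hc₃, hl₃⟩ := exists_isChain_of_reflTransGen huq
  have hc : ((p :: l₁) ++ ((y :: l₂) ++ l₃)).IsChain D := by
    refine hc₁.append (hc₂.append hc₃.tail ?_) ?_
    · simpa [hl₂] using (isChain_cons.1 hc₃).1
    · simpa [hl₁] using hxy
  have hlast : ((p :: l₁) ++ ((y :: l₂) ++ l₃)).getLast? = some q := by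
    rw [getLast?_append, getLast?_append, hl₂]
    rw [getLast?_cons] at hl₃
    cases h : l₃.getLast? <;> simp_all
  have hx : x ∈ p :: l₁ := mem_of_getLast? hl₁
  have hu : u ∈ (y :: l₂) ++ l₃ := mem_append_left _ (mem_of_getLast? hl₂)
  refine (pairwise_append.1 (hsf.pairwise_of_isChain hc fun a ha b hb => ?_)).2.2 x hx u hu
  obtain rfl : a = p := by simpa using ha.symm
  obtain rfl : b = q := by rw [hlast] at hb; simpa using hb.symm
  exact hpq

end ShortcutFree

def IsTopologicalSort (D : V → V → Prop) (τ : List V) : Prop :=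
  τ.Nodup ∧ (∀ v, v ∈ τ) ∧ τ.Pairwise fun a b => ¬ D b a

lemma DigraphAcyclic.exists_isTopologicalSort [Fintype V] {D : V → V → Prop}
    (hD : DigraphAcyclic D) : ∃ τ, IsTopologicalSort D τ := by
  classical
  let rank : V → ℕ := fun v => (Finset.univ.filter fun y => TransGen D y v).card
  have hrank : ∀ a b, D a b → rank a < rank b := fun a b hab => by
    refine Finset.card_lt_card ((Finset.ssubset_iff_of_subset ?_).2 ⟨a, ?_, ?_⟩)
    · intro y
      simpa using fun hya => hya.tail hab
    · simpa using TransGen.single hab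
    · simpa using hD a
  refine ⟨Finset.univ.toList.mergeSort fun a b => rank a ≤ rank b, ?_, fun v => ?_, ?_⟩
  · exact (mergeSort_perm _ _).nodup_iff.2 (Finset.nodup_toList _)
  · simp [(mergeSort_perm _ _).mem_iff]
  · refine (pairwise_mergeSort ?_ ?_ _).imp fun {a b} hab hba => ?_
    · simpa using fun a b c => le_trans
    · simpa using fun a b => le_total (rank a) (rank b)
    · exact (hrank b a hba).not_ge (by simpa using hab)

section Blocks
variable {D : V → V → Prop} {τ : List V}

open Classical in
noncomputable def restrictTo (τ : List V) (s : Set V) : List V := τ.filter (· ∈ s)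

lemma mem_restrictTo (hτ : IsTopologicalSort D τ) {s : Set V} {v : V} :
    v ∈ restrictTo τ s ↔ v ∈ s := by
  simpa [restrictTo] using fun _ => hτ.2.1 v

def ancestors (D : V → V → Prop) (x : V) : Set V := {v | ReflTransGen D v x}

def descendants (D : V → V → Prop) (u : V) : Set V := {v | ReflTransGen D u v}

lemma notMem_descendants_of_mem_ancestors (hD : DigraphAcyclic D) {x u v : V}
    (hxu : TransGen D x u) (hv : v ∈ ancestors D x) : v ∉ descendants D u :=
  fun hv' => hD x (hxu.trans_left (ReflTransGen.trans hv' hv))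

noncomputable def ancBlock (τ : List V) (D : V → V → Prop) (x : V) : List V :=
  restrictTo τ (ancestors D x) ++ restrictTo τ (ancestors D x)ᶜ

/-- When `x ⇝ u`, every vertex occurs twice in this block, and `x` twice before `u`. -/
noncomputable def pathBlock (τ : List V) (D : V → V → Prop) (x u : V) : List V :=
  restrictTo τ (ancestors D x) ++ restrictTo τ (ancestors D x ∪ descendants D u)ᶜ ++
    restrictTo τ (ancestors D x) ++ restrictTo τ (descendants D u) ++
    restrictTo τ (ancestors D x)ᶜ

open Classical in
noncomputable def blocks [Fintype V] (τ : List V) (D : V → V → Prop) : List (List V) :=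
  Finset.univ.toList.flatMap fun x => ancBlock τ D x ::
    (Finset.univ.toList.filter fun u => TransGen D x u ∧ ¬ D x u).map (pathBlock τ D x)

lemma ancBlock_mem_blocks [Fintype V] (x : V) : ancBlock τ D x ∈ blocks τ D := by
  simp only [blocks, mem_flatMap, mem_cons]
  exact ⟨x, by simp, Or.inl rfl⟩

lemma pathBlock_mem_blocks [Fintype V] {x u : V} (hxu : TransGen D x u) (hnxu : ¬ D x u) :
    pathBlock τ D x u ∈ blocks τ D := by
  simp only [blocks, mem_flatMap, mem_cons, mem_map, mem_filter]
  exact ⟨x, by simp, Or.inr ⟨u, ⟨by simp, by simp [hxu, hnxu]⟩, rfl⟩⟩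

lemma mem_blocks_cases [Fintype V] {B : List V} (hB : B ∈ blocks τ D) :
    (∃ x, B = ancBlock τ D x) ∨
      ∃ x u, TransGen D x u ∧ ¬ D x u ∧ B = pathBlock τ D x u := by
  simp only [blocks, mem_flatMap, mem_cons, mem_map, mem_filter] at hB
  obtain ⟨x, -, rfl | ⟨u, ⟨-, hu⟩, rfl⟩⟩ := hB
  · exact Or.inl ⟨x, rfl⟩
  · simp only [decide_eq_true_eq] at hu
    exact Or.inr ⟨x, u, hu.1, hu.2, rfl⟩

variable [DecidableEq V]

lemma leads_of_pairwise {l : List V} (hnd : l.Nodup) (hl : l.Pairwise fun a b => ¬ D b a)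
    {p q : V} (hpq : D p q) {c : ℤ} (h0 : 0 ≤ c) (h1 : p ∈ l → c ≤ 0)
    (h2 : q ∈ l → p ∉ l → 1 ≤ c) (h3 : c ≤ 1) : Leads c l p q := by
  rintro t ⟨r, rfl⟩
  have hpt : t.count p ≤ 1 := nodup_iff_count_le_one.1 (hnd.sublist (sublist_append_left t r)) p
  have hqt : t.count q ≤ 1 := nodup_iff_count_le_one.1 (hnd.sublist (sublist_append_left t r)) q
  simp only [countGap]
  by_cases hp : p ∈ t
  · have := h1 (mem_append_left r hp)
    have := count_pos_iff.2 hp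
    omega
  · rw [count_eq_zero_of_not_mem hp]
    by_cases hq : q ∈ t
    · have hpl : p ∉ t ++ r := fun hpl => (mem_append.1 hpl).elim hp
        fun hpr => (pairwise_append.1 hl).2.2 q hq p hpr hpq
      have := h2 (mem_append_left r hq) hpl
      omega
    · rw [count_eq_zero_of_not_mem hq]
      omega

lemma count_restrictTo_of_mem (hτ : IsTopologicalSort D τ) {s : Set V} {v : V} (hv : v ∈ s) :
    (restrictTo τ s).count v = 1 :=
  count_eq_one_of_mem (hτ.1.sublist filter_sublist) ((mem_restrictTo hτ).2 hv)

lemma count_restrictTo_of_notMem (hτ : IsTopologicalSort D τ) {s : Set V} {v : V}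
    (hv : v ∉ s) : (restrictTo τ s).count v = 0 :=
  count_eq_zero_of_not_mem (mt (mem_restrictTo hτ).1 hv)

lemma leads_restrictTo (hτ : IsTopologicalSort D τ) {p q : V} (hpq : D p q) {s : Set V} {c : ℤ}
    (h0 : 0 ≤ c) (h1 : p ∈ s → c ≤ 0) (h2 : q ∈ s → p ∉ s → 1 ≤ c)
    (h3 : c ≤ 1) : Leads c (restrictTo τ s) p q :=
  leads_of_pairwise (hτ.1.sublist filter_sublist) (hτ.2.2.sublist filter_sublist) hpq h0
    (fun hp => h1 ((mem_restrictTo hτ).1 hp))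
    (fun hq hp => h2 ((mem_restrictTo hτ).1 hq) (mt (mem_restrictTo hτ).2 hp)) h3

lemma countGap_ancBlock (hτ : IsTopologicalSort D τ) (x p q : V) :
    countGap p q (ancBlock τ D x) = 0 := by
  have hcount : ∀ v, (ancBlock τ D x).count v = 1 := fun v => by
    by_cases hv : v ∈ ancestors D x <;>
      simp [ancBlock, hv, count_restrictTo_of_mem hτ, count_restrictTo_of_notMem hτ]
  simp [countGap, hcount]

lemma leads_ancBlock (hτ : IsTopologicalSort D τ) (x : V) {p q : V} (hpq : D p q) :
    Leads 0 (ancBlock τ D x) p q := by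
  have hclosed : q ∈ ancestors D x → p ∈ ancestors D x := ReflTransGen.head hpq
  simp only [ancBlock, leads_append, countGap]
  by_cases hp : p ∈ ancestors D x <;> by_cases hq : q ∈ ancestors D x <;>
    simp_all [count_restrictTo_of_mem hτ, count_restrictTo_of_notMem hτ,
      leads_restrictTo hτ hpq]

lemma exists_prefix_ancBlock (hτ : IsTopologicalSort D τ) {x y : V} (hy : y ∉ ancestors D x) :
    ∃ t, t <+: ancBlock τ D x ∧ countGap x y t = 1 :=
  ⟨_, prefix_append _ _, by
    simp [countGap, count_restrictTo_of_mem hτ (s := ancestors D x) ReflTransGen.refl,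
      count_restrictTo_of_notMem hτ hy]⟩

lemma countGap_pathBlock (hτ : IsTopologicalSort D τ) (hD : DigraphAcyclic D) {x u : V}
    (hxu : TransGen D x u) (p q : V) : countGap p q (pathBlock τ D x u) = 0 := by
  have hcount : ∀ v, (pathBlock τ D x u).count v = 2 := fun v => by
    have := notMem_descendants_of_mem_ancestors hD hxu (v := v)
    by_cases hA : v ∈ ancestors D x <;> by_cases hB : v ∈ descendants D u <;>
      simp_all [pathBlock, count_restrictTo_of_mem hτ, count_restrictTo_of_notMem hτ]
  simp [countGap, hcount]

lemma leads_pathBlock (hτ : IsTopologicalSort D τ) (hD : SemiTransitive D) {x u : V}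
    (hxu : TransGen D x u) (hnxu : ¬ D x u) {p q : V} (hpq : D p q) :
    Leads 0 (pathBlock τ D x u) p q := by
  have hA : q ∈ ancestors D x → p ∈ ancestors D x := ReflTransGen.head hpq
  have hB : p ∈ descendants D u → q ∈ descendants D u := fun h => h.tail hpq
  have hAB : p ∈ ancestors D x → q ∉ descendants D u :=
    fun hp hq => hnxu (hD.2.rel_of_path hp hxu hq hpq)
  have hp := notMem_descendants_of_mem_ancestors hD.1 hxu (v := p)
  have hq := notMem_descendants_of_mem_ancestors hD.1 hxu (v := q)
  simp only [pathBlock, leads_append, countGap]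
  by_cases hpA : p ∈ ancestors D x <;> by_cases hqA : q ∈ ancestors D x <;>
    by_cases hpB : p ∈ descendants D u <;> by_cases hqB : q ∈ descendants D u <;>
    simp_all [count_restrictTo_of_mem hτ, count_restrictTo_of_notMem hτ,
      leads_restrictTo hτ hpq]

lemma exists_prefix_pathBlock (hτ : IsTopologicalSort D τ) (hD : DigraphAcyclic D) {x u : V}
    (hxu : TransGen D x u) : ∃ t, t <+: pathBlock τ D x u ∧ countGap x u t = 2 := by
  have hx : x ∈ ancestors D x := ReflTransGen.refl
  have hu : u ∈ descendants D u := ReflTransGen.refl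
  have hux : u ∉ ancestors D x := fun h => notMem_descendants_of_mem_ancestors hD hxu h hu
  have hxM : x ∉ (ancestors D x ∪ descendants D u)ᶜ := fun h => h (Or.inl hx)
  have huM : u ∉ (ancestors D x ∪ descendants D u)ᶜ := fun h => h (Or.inr hu)
  refine ⟨_, (prefix_append _ _).trans (prefix_append _ _), ?_⟩
  simp only [countGap, count_append, count_restrictTo_of_mem hτ hx,
    count_restrictTo_of_notMem hτ hux, count_restrictTo_of_notMem hτ hxM,
    count_restrictTo_of_notMem hτ huM]
  norm_num

variable [Fintype V]

lemma countGap_of_mem_blocks (hτ : IsTopologicalSort D τ) (hD : DigraphAcyclic D) {B : List V}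
    (hB : B ∈ blocks τ D) (x y : V) : countGap x y B = 0 := by
  rcases mem_blocks_cases hB with ⟨v, rfl⟩ | ⟨v, u, hvu, -, rfl⟩
  exacts [countGap_ancBlock hτ v x y, countGap_pathBlock hτ hD hvu x y]

lemma leads_flatten_blocks (hτ : IsTopologicalSort D τ) (hD : SemiTransitive D) {x y : V}
    (hxy : D x y) : Leads 0 (blocks τ D).flatten x y :=
  leads_flatten (fun B hB => countGap_of_mem_blocks hτ hD.1 hB x y) fun B hB => by
    rcases mem_blocks_cases hB with ⟨v, rfl⟩ | ⟨v, u, hvu, hnvu, rfl⟩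
    exacts [leads_ancBlock hτ v hxy, leads_pathBlock hτ hD hvu hnvu hxy]

lemma not_leads_flatten_blocks (hτ : IsTopologicalSort D τ) (hD : DigraphAcyclic D) {x y : V}
    (hxy : x ≠ y) (hnxy : ¬ D x y) : ¬ Leads 0 (blocks τ D).flatten x y := by
  have hbal := fun B hB => countGap_of_mem_blocks hτ hD (B := B) hB x y
  suffices ∃ t, t <+: (blocks τ D).flatten ∧ (countGap x y t < 0 ∨ 1 < countGap x y t) by
    obtain ⟨t, ht, hgap⟩ := this
    exact fun h => by have := h t ht; omega
  by_cases hpath : TransGen D x y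
  · obtain ⟨t, ht, hgap⟩ := exists_prefix_pathBlock hτ hD hpath
    obtain ⟨t', ht', hgap'⟩ := exists_prefix_flatten hbal (pathBlock_mem_blocks hpath hnxy) ht
    exact ⟨t', ht', by omega⟩
  · have hx : x ∉ ancestors D y := fun h =>
      (reflTransGen_iff_eq_or_transGen.1 h).elim (fun h => hxy h.symm) hpath
    obtain ⟨t, ht, hgap⟩ := exists_prefix_ancBlock hτ hx
    obtain ⟨t', ht', hgap'⟩ := exists_prefix_flatten hbal (ancBlock_mem_blocks y) ht
    exact ⟨t', ht', by rw [hgap', countGap_swap, hgap]; decide⟩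

theorem SemiTransitive.exists_word (hD : SemiTransitive D) :
    ∃ w : List V, (∀ v, v ∈ w) ∧
      ∀ x y, x ≠ y → (Alternate w x y ↔ D x y ∨ D y x) := by
  obtain ⟨τ, hτ⟩ := hD.1.exists_isTopologicalSort
  refine ⟨(blocks τ D).flatten, fun v => mem_flatten.2 ⟨_, ancBlock_mem_blocks v, ?_⟩,
    fun x y hxy => ?_⟩
  · by_cases hv : v ∈ ancestors D v <;> simp [ancBlock, mem_restrictTo hτ, hv]
  rw [alternate_iff_leads hxy]
  refine ⟨fun h => ?_, Or.imp (leads_flatten_blocks hτ hD) (leads_flatten_blocks hτ hD)⟩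
  by_contra hn
  obtain ⟨hnxy, hnyx⟩ := not_or.1 hn
  exact h.elim (not_leads_flatten_blocks hτ hD.1 hxy hnxy)
    (not_leads_flatten_blocks hτ hD.1 hxy.symm hnyx)

end Blocks

end

/-- A finite simple graph is word-representable if and only if it admits a
semi-transitive orientation. -/
theorem word_representable_iff_semi_transitive_orientation
    {V : Type*} [Fintype V] [DecidableEq V] (G : SimpleGraph V) :
    WordRepresentable G ↔ ∃ D : V → V → Prop, IsOrientation G D ∧ SemiTransitive D := by
  refine ⟨WordRepresentable.exists_semiTransitive_orientation, ?_⟩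
  rintro ⟨D, hDG, hD⟩
  obtain ⟨w, hw, hwD⟩ := hD.exists_word
  exact ⟨w, hw, fun x y hxy => (hwD x y hxy).trans (hDG.2 x y).symm⟩
end

section
/- Every 3-colorable finite simple graph is word-representable. -/
/-!
Fix a proper colouring `c : V → Fin 3`. Block `i` lists the vertices of colour `i`, then those
of colour `i + 1`; a segment is the concatenation of blocks `0`, `2`, `1`. When
`c y = c x + 1`, block `c x` is the only one containing both `x` and `y`, and a segment
restricts to `{x, y}` as a rotation of `xyxy`, so `x` and `y` alternate in any concatenation of
segments. For each non-adjacent such pair we add a segment whose block `c x` puts `y` just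
before `x`: it restricts to `{x, y}` with a repeated letter, and like a plain segment to every
other pair. Vertices of
equal colour occur in a segment in the order of the underlying vertex list, so two initial
segments over a list and its reverse keep them from alternating.
-/

namespace List

variable {α : Type*}

theorem Nodup.filter_eq_of_sublist {p : α → Bool} {l s : List α} (hl : l.Nodup) (hs : s <+ l)
    (hsp : ∀ a ∈ s, p a) (hlp : ∀ a ∈ l, p a → a ∈ s) : l.filter p = s := by
  have hsub : s <+ l.filter p := by simpa [filter_eq_self.2 hsp] using hs.filter p
  refine (hsub.eq_of_length_le ?_).symm
  refine ((hl.filter p).subperm fun a ha => ?_).length_le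
  obtain ⟨hal, hpa⟩ := mem_filter.1 ha
  exact hlp a hal hpa

theorem pair_sublist_append {a b : α} {l₁ l₂ : List α} (ha : a ∈ l₁) (hb : b ∈ l₂) :
    [a, b] <+ l₁ ++ l₂ :=
  (singleton_sublist.2 ha).append (singleton_sublist.2 hb)

theorem not_isChain_ne_of_infix {l : List α} {a : α} (h : [a, a] <:+: l) :
    ¬ l.IsChain (· ≠ ·) :=
  fun hl => by simpa using hl.infix h

theorem exists_infix_append_reverse {l : List α} (hl : l ≠ []) :
    ∃ a, [a, a] <:+: l ++ l.reverse := by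
  obtain ⟨l', a, rfl⟩ := (eq_nil_or_concat l).resolve_left hl
  exact ⟨a, l', l'.reverse, by simp⟩

theorem isChain_flatten_of_forall_eq {R : α → α → Prop} {s : List α} {L : List (List α)}
    (hs : (s ++ s).IsChain R) (hL : ∀ l ∈ L, l = s) : L.flatten.IsChain R := by
  rcases eq_or_ne s [] with rfl | hne
  · simp [flatten_eq_nil_iff.2 hL]
  have hnil : [] ∉ L := fun h => hne (hL [] h).symm
  refine (isChain_flatten hnil).2
    ⟨fun l hl => hL l hl ▸ hs.infix (prefix_append s s).isInfix, ?_⟩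
  rw [eq_replicate_iff.2 ⟨rfl, hL⟩]
  exact isChain_replicate_of_rel _ fun a ha b hb => (isChain_append.1 hs).2.2 a ha b hb

end List

namespace WordRepresentation

open List

variable {V : Type*}

section Blocks

variable (c : V → Fin 3)

def colorClass (ℓ : List V) (i : Fin 3) : List V := ℓ.filter (c · = i)

def plainBlock (ℓ : List V) (i : Fin 3) : List V := colorClass c ℓ i ++ colorClass c ℓ (i + 1)

def segment (B : Fin 3 → List V) : List V := B 0 ++ B 2 ++ B 1

def IsBlock (i : Fin 3) (B : List V) : Prop :=
  B.Nodup ∧ ∀ v, v ∈ B ↔ c v = i ∨ c v = i + 1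

variable {c} {ℓ : List V} {i : Fin 3} {x y : V}

@[simp] theorem mem_colorClass : x ∈ colorClass c ℓ i ↔ x ∈ ℓ ∧ c x = i := by
  simp [colorClass]

theorem isBlock_plainBlock (hℓ : ℓ.Nodup) (hall : ∀ v, v ∈ ℓ) :
    IsBlock c i (plainBlock c ℓ i) := by
  refine ⟨(hℓ.filter _).append (hℓ.filter _) fun a ha hb => ?_, fun v => by
    simp [plainBlock, hall]⟩
  grind [mem_colorClass]

theorem subset_segment (B : Fin 3 → List V) (i : Fin 3) : B i ⊆ segment B := by
  intro v hv
  fin_cases i <;> simp_all [segment]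

theorem pair_sublist_plainBlock (hx : c x = i) (hy : c y = i + 1) (hall : ∀ v, v ∈ ℓ) :
    [x, y] <+ plainBlock c ℓ i :=
  pair_sublist_append (by simp [hx, hall]) (by simp [hy, hall])

/-- The restriction to `{x, y}` of a segment when `c x = i`, `c y = i + 1` and block `i`
restricts to `t`: the other two blocks each contain only one of `x` and `y`. -/
def pairSegment (i : Fin 3) (x y : V) (t : List V) : List V :=
  segment fun j => if j = i then t else if j = i + 1 then [y] else [x]

theorem isChain_pairSegment_append_self (hxy : x ≠ y) :
    (pairSegment i x y [x, y] ++ pairSegment i x y [x, y]).IsChain (· ≠ ·) := by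
  fin_cases i <;> simp [pairSegment, segment, hxy, hxy.symm]

theorem not_isChain_pairSegment_swap : ¬ (pairSegment i x y [y, x]).IsChain (· ≠ ·) := by
  fin_cases i <;> simp [pairSegment, segment]

end Blocks

variable [DecidableEq V]

def restrictPair (w : List V) (x y : V) : List V := w.filter fun z => z = x ∨ z = y

section Restriction

variable {w w' : List V} {x y : V}

theorem alternate_iff_isChain : Alternate w x y ↔ (restrictPair w x y).IsChain (· ≠ ·) :=
  Iff.rfl

theorem restrictPair_comm : restrictPair w x y = restrictPair w y x :=
  filter_congr fun z _ => by simp [or_comm]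

theorem alternate_comm : Alternate w x y ↔ Alternate w y x := by
  rw [alternate_iff_isChain, alternate_iff_isChain, restrictPair_comm]

theorem restrictPair_append :
    restrictPair (w ++ w') x y = restrictPair w x y ++ restrictPair w' x y :=
  filter_append ..

theorem restrictPair_reverse :
    restrictPair w.reverse x y = (restrictPair w x y).reverse :=
  filter_reverse

theorem restrictPair_flatMap {ι : Type*} (L : List ι) (f : ι → List V) :
    restrictPair (L.flatMap f) x y = L.flatMap fun i => restrictPair (f i) x y :=
  filter_flatMap

theorem restrictPair_ne_nil (hx : x ∈ w) : restrictPair w x y ≠ [] :=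
  ne_nil_of_mem (a := x) (by simp [restrictPair, hx])

theorem restrictPair_eq_singleton (hw : w.Nodup) (hx : x ∈ w) (hy : y ∉ w) :
    restrictPair w x y = [x] :=
  hw.filter_eq_of_sublist (singleton_sublist.2 hx) (by simp) fun a ha h => by
    rcases of_decide_eq_true h with rfl | rfl
    exacts [mem_singleton_self _, absurd ha hy]

theorem restrictPair_eq_pair (hw : w.Nodup) (h : [x, y] <+ w) : restrictPair w x y = [x, y] :=
  hw.filter_eq_of_sublist h (by simp) fun a _ h => by simpa using of_decide_eq_true h

end Restriction

section TwistedBlocks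

variable (c : V → Fin 3)

/-- Moving `v` to just before `u` reverses the order of `u` and `v` and of no other pair. -/
def twistedBlock (ℓ : List V) (u v : V) (i : Fin 3) : List V :=
  if c u = i ∧ c v = i + 1 then
    (colorClass c ℓ i).erase u ++ v :: u :: (colorClass c ℓ (i + 1)).erase v
  else plainBlock c ℓ i

variable {c} {ℓ : List V} {i : Fin 3} {u v x y : V}

theorem twistedBlock_perm (hu : u ∈ ℓ) (hv : v ∈ ℓ) :
    twistedBlock c ℓ u v i ~ plainBlock c ℓ i := by
  unfold twistedBlock
  split_ifs with h
  · have hu' : u ∈ colorClass c ℓ i := mem_colorClass.2 ⟨hu, h.1⟩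
    have hv' : v ∈ colorClass c ℓ (i + 1) := mem_colorClass.2 ⟨hv, h.2⟩
    refine (((perm_cons_erase hu').append (perm_cons_erase hv')).trans ?_).symm
    grind [perm_middle, Perm.swap]
  · rfl

theorem isBlock_twistedBlock (hℓ : ℓ.Nodup) (hall : ∀ v, v ∈ ℓ) :
    IsBlock c i (twistedBlock c ℓ u v i) := by
  have hp : twistedBlock c ℓ u v i ~ plainBlock c ℓ i := twistedBlock_perm (hall u) (hall v)
  obtain ⟨hnd, hmem⟩ := isBlock_plainBlock (i := i) (c := c) hℓ hall
  exact ⟨hp.nodup_iff.2 hnd, fun w => hp.mem_iff.trans (hmem w)⟩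

theorem pair_sublist_twistedBlock (hx : c x = i) (hy : c y = i + 1) (hall : ∀ v, v ∈ ℓ)
    (huv : (u, v) ≠ (x, y)) : [x, y] <+ twistedBlock c ℓ u v i := by
  unfold twistedBlock
  split_ifs with h
  · by_cases hux : u = x
    · subst hux
      have hvy : y ≠ v := fun h => huv (by rw [h])
      simpa using pair_sublist_append (l₁ := (colorClass c ℓ i).erase u ++ [v, u])
        (by simp) (by simp [mem_erase_of_ne hvy, hy, hall])
    · refine pair_sublist_append (by simp [mem_erase_of_ne (Ne.symm hux), hx, hall]) ?_
      by_cases hvy : y = v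
      · simp [hvy]
      · simp [mem_erase_of_ne hvy, hy, hall]
  · exact pair_sublist_plainBlock hx hy hall

theorem swap_sublist_twistedBlock (hx : c x = i) (hy : c y = i + 1) :
    [y, x] <+ twistedBlock c ℓ x y i := by
  rw [twistedBlock, if_pos ⟨hx, hy⟩]
  exact sublist_append_of_sublist_right (by simp)

end TwistedBlocks

section Segments

variable {c : V → Fin 3} {ℓ : List V} {B : Fin 3 → List V} {i j : Fin 3} {x y : V}

theorem IsBlock.restrictPair_eq {L : List V} (hL : IsBlock c j L) (hx : c x = i)
    (hy : c y = i + 1) (hj : j ≠ i) : restrictPair L x y = if j = i + 1 then [y] else [x] := by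
  split_ifs with hj'
  · rw [restrictPair_comm]
    exact restrictPair_eq_singleton hL.1 ((hL.2 y).2 (by grind)) fun h => by
      have := (hL.2 x).1 h; grind
  · exact restrictPair_eq_singleton hL.1 ((hL.2 x).2 (by grind)) fun h => by
      have := (hL.2 y).1 h; grind

theorem restrictPair_segment (hB : ∀ j, IsBlock c j (B j)) (hx : c x = i) (hy : c y = i + 1) :
    restrictPair (segment B) x y = pairSegment i x y (restrictPair (B i) x y) := by
  have hblock (j : Fin 3) : restrictPair (B j) x y =
      if j = i then restrictPair (B i) x y else if j = i + 1 then [y] else [x] := by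
    by_cases hj : j = i
    · rw [if_pos hj, hj]
    · rw [if_neg hj]
      exact (hB j).restrictPair_eq hx hy hj
  simp only [segment, restrictPair_append]
  rw [hblock 0, hblock 2, hblock 1]
  rfl

theorem restrictPair_colorClass (hx : c x = i) (hy : c y = i) :
    restrictPair (colorClass c ℓ j) x y = if j = i then restrictPair ℓ x y else [] := by
  simp only [restrictPair, colorClass, filter_filter]
  split_ifs with hj
  · exact filter_congr fun z _ => by grind
  · exact filter_eq_nil_iff.2 fun z _ => by grind

theorem restrictPair_segment_plainBlock_of_color_eq (hx : c x = i) (hy : c y = i) :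
    restrictPair (segment (plainBlock c ℓ)) x y =
      restrictPair ℓ x y ++ restrictPair ℓ x y := by
  simp only [segment, plainBlock, restrictPair_append, restrictPair_colorClass hx hy]
  fin_cases i <;> simp

theorem restrictPair_segment_plainBlock (hℓ : ℓ.Nodup) (hall : ∀ v, v ∈ ℓ)
    (h : c y = c x + 1) :
    restrictPair (segment (plainBlock c ℓ)) x y = pairSegment (c x) x y [x, y] := by
  rw [restrictPair_segment (fun j => isBlock_plainBlock hℓ hall) rfl h,
    restrictPair_eq_pair (isBlock_plainBlock hℓ hall).1 (pair_sublist_plainBlock rfl h hall)]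

theorem restrictPair_segment_twistedBlock (hℓ : ℓ.Nodup) (hall : ∀ v, v ∈ ℓ)
    (h : c y = c x + 1) (p : V × V) :
    restrictPair (segment (twistedBlock c ℓ p.1 p.2)) x y =
      pairSegment (c x) x y (if p = (x, y) then [y, x] else [x, y]) := by
  have hB (j : Fin 3) : IsBlock c j (twistedBlock c ℓ p.1 p.2 j) := isBlock_twistedBlock hℓ hall
  rw [restrictPair_segment hB rfl h]
  split_ifs with hp
  · subst hp
    rw [restrictPair_comm, restrictPair_eq_pair (hB _).1 (swap_sublist_twistedBlock rfl h)]
  · rw [restrictPair_eq_pair (hB _).1 (pair_sublist_twistedBlock rfl h hall hp)]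

end Segments

section Word

variable [Fintype V]

noncomputable def representingWord (G : SimpleGraph V) [DecidableRel G.Adj] (c : V → Fin 3) :
    List V :=
  segment (plainBlock c Finset.univ.toList) ++ segment (plainBlock c Finset.univ.toList.reverse) ++
    (Finset.univ.filter fun p : V × V => ¬ G.Adj p.1 p.2).toList.flatMap fun p =>
      segment (twistedBlock c Finset.univ.toList p.1 p.2)

variable {G : SimpleGraph V} [DecidableRel G.Adj] {c : V → Fin 3} {x y : V}

theorem mem_representingWord (v : V) : v ∈ representingWord G c := by
  have hv : v ∈ plainBlock c Finset.univ.toList (c v) := by simp [plainBlock]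
  exact mem_append_left _ (mem_append_left _ (subset_segment _ _ hv))

theorem alternate_representingWord_iff (h : c y = c x + 1) :
    Alternate (representingWord G c) x y ↔ G.Adj x y := by
  have hℓ := Finset.nodup_toList (Finset.univ : Finset V)
  have hall (v : V) : v ∈ (Finset.univ : Finset V).toList := by simp
  have hxy : x ≠ y := by rintro rfl; grind
  rw [alternate_iff_isChain, representingWord, restrictPair_append, restrictPair_append,
    restrictPair_flatMap, restrictPair_segment_plainBlock hℓ hall h,
    restrictPair_segment_plainBlock (nodup_reverse.2 hℓ) (by simp) h]
  simp only [restrictPair_segment_twistedBlock hℓ hall h, flatMap_def]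
  constructor
  · intro hchain
    by_contra hadj
    have hmem : pairSegment (c x) x y [y, x] ∈
        (Finset.univ.filter fun p : V × V => ¬ G.Adj p.1 p.2).toList.map fun p =>
          pairSegment (c x) x y (if p = (x, y) then [y, x] else [x, y]) :=
      mem_map.2 ⟨(x, y), by simp [hadj], by simp⟩
    exact not_isChain_pairSegment_swap
      (hchain.infix ((infix_of_mem_flatten hmem).trans (suffix_append _ _).isInfix))
  · intro hadj
    rw [append_assoc, ← flatten_cons, ← flatten_cons]
    refine isChain_flatten_of_forall_eq
      (isChain_pairSegment_append_self (i := c x) hxy) fun l hl => ?_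
    simp only [mem_cons, mem_map] at hl
    rcases hl with rfl | rfl | ⟨p, hp, rfl⟩
    · rfl
    · rfl
    · have : p ≠ (x, y) := by rintro rfl; simp [hadj] at hp
      simp [this]

theorem not_alternate_representingWord (h : c x = c y) :
    ¬ Alternate (representingWord G c) x y := by
  have hx : x ∈ (Finset.univ : Finset V).toList := by simp
  obtain ⟨a, ha⟩ := exists_infix_append_reverse (restrictPair_ne_nil (y := y) hx)
  rw [alternate_iff_isChain, representingWord, restrictPair_append, restrictPair_append,
    restrictPair_segment_plainBlock_of_color_eq rfl h.symm,
    restrictPair_segment_plainBlock_of_color_eq rfl h.symm, restrictPair_reverse]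
  exact not_isChain_ne_of_infix (ha.trans ⟨restrictPair Finset.univ.toList x y, _,
    by simp only [append_assoc]; rfl⟩)

end Word

end WordRepresentation

open WordRepresentation

/-- Every 3-colorable finite simple graph is word-representable. -/
theorem three_colorable_word_representable
    {V : Type*} [Fintype V] [DecidableEq V] (G : SimpleGraph V)
    (h : G.Colorable 3) : WordRepresentable G := by
  classical
  obtain ⟨C⟩ := h
  refine ⟨representingWord G C, mem_representingWord, fun x y _ => ?_⟩
  rcases (by decide : ∀ a b : Fin 3, a = b ∨ b = a + 1 ∨ a = b + 1) (C x) (C y)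
    with hxy | hxy | hxy
  · exact iff_of_false (not_alternate_representingWord hxy) fun hadj => C.valid hadj hxy
  · exact alternate_representingWord_iff hxy
  · rw [alternate_comm, G.adj_comm]
    exact alternate_representingWord_iff hxy
end

section
/- The wheel graph W_7 (a 7-cycle plus a vertex adjacent to all seven cycle vertices) is not word-representable. -/
/-
Fix an occurrence of a vertex `v` in a word representing `G`. A neighbour `a` of `v` alternates
with `v`, so the number of `a`'s minus the number of `v`'s in a prefix takes only two values: its
value just before that occurrence, and one less. Say that `a` gains on `b` if at some prefix the
lead of `a` over `b` exceeds its value at the occurrence; this happens exactly when `a` is at the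
upper value and `b` at the lower one. Two neighbours of `v` then alternate iff they do not both
gain on each other, and "`a` gains on `b` but not conversely" is a transitive orientation of the
neighbourhood of `v`: that neighbourhood is a comparability graph.

The neighbourhood of the hub of `W_n` is the rim `C_n`. In a transitive orientation of a cycle
without chords consecutive edges point in opposite directions, which 2-colours the cycle; for odd
`n ≥ 5` that is impossible.
-/

/-- The wheel graph `W n`: a cycle on the `n` vertices `some a`, `a : Fin n` (with `a` and `b`
adjacent when their indices differ by one modulo `n`), together with the hub `none`,
adjacent to all cycle vertices. -/
def wheel (n : ℕ) : SimpleGraph (Option (Fin n)) where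
  Adj x y := x ≠ y ∧ (x = none ∨ y = none ∨ ∃ a b : Fin n,
      x = some a ∧ y = some b ∧ ((a.val + 1) % n = b.val ∨ (b.val + 1) % n = a.val))
  symm := by
    constructor
    rintro x y ⟨hxy, h⟩
    refine ⟨hxy.symm, ?_⟩
    rcases h with h | h | ⟨a, b, ha, hb, hab⟩
    · exact Or.inr (Or.inl h)
    · exact Or.inl h
    · exact Or.inr (Or.inr ⟨b, a, hb, ha, hab.symm⟩)
  loopless := by constructor; rintro x ⟨h, -⟩; exact h rfl

variable {α V W : Type*} [DecidableEq α]

def prefixLead (w : List α) (x y : α) (p : ℕ) : ℤ :=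
  ((w.take p).count x : ℤ) - (w.take p).count y

section prefixLead

variable {w : List α} {x y : α}

@[simp]
lemma prefixLead_zero : prefixLead w x y 0 = 0 := by
  simp [prefixLead]

lemma prefixLead_cons_succ (a : α) (p : ℕ) :
    prefixLead (a :: w) x y (p + 1) =
      prefixLead w x y p + ((if a = x then 1 else 0) - if a = y then 1 else 0) := by
  simp only [prefixLead, List.take_succ_cons, List.count_cons, beq_iff_eq]
  split_ifs <;> push_cast <;> ring

lemma prefixLead_succ_of_getElem? {t : ℕ} {c : α} (hc : w[t]? = some c) :
    prefixLead w x y (t + 1) =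
      prefixLead w x y t + ((if c = x then 1 else 0) - if c = y then 1 else 0) := by
  simp only [prefixLead, List.take_add_one, hc, Option.toList_some, List.count_append,
    List.count_singleton, beq_iff_eq]
  split_ifs <;> push_cast <;> ring

lemma prefixLead_swap (p : ℕ) : prefixLead w y x p = -prefixLead w x y p := by
  simp only [prefixLead]; ring

lemma prefixLead_sub_prefixLead (a b c : α) (p : ℕ) :
    prefixLead w a c p - prefixLead w b c p = prefixLead w a b p := by
  simp only [prefixLead]; ring

end prefixLead

lemma alternate_iff_isChain (w : List α) (x y : α) :
    Alternate w x y ↔ (w.filter fun z => z = x ∨ z = y).IsChain (· ≠ ·) :=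
  Iff.rfl

lemma filter_eq_or_comm (w : List α) (x y : α) :
    w.filter (fun z => z = y ∨ z = x) = w.filter (fun z => z = x ∨ z = y) := by
  simp only [or_comm]

lemma alternate_comm (w : List α) (x y : α) : Alternate w x y ↔ Alternate w y x := by
  rw [alternate_iff_isChain, alternate_iff_isChain, filter_eq_or_comm]

lemma alternate_and_head?_ne_iff (w : List α) {x y : α} (hxy : x ≠ y) :
    Alternate w x y ∧ (w.filter (fun z => z = x ∨ z = y)).head? ≠ some x ↔
      ∀ p, -1 ≤ prefixLead w x y p ∧ prefixLead w x y p ≤ 0 := by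
  induction w generalizing x y with
  | nil => simp [alternate_iff_isChain, prefixLead]
  | cons a w ih =>
    have shift : (∀ p, -1 ≤ prefixLead (a :: w) x y p ∧ prefixLead (a :: w) x y p ≤ 0) ↔
        ∀ p, -1 ≤ prefixLead (a :: w) x y (p + 1) ∧ prefixLead (a :: w) x y (p + 1) ≤ 0 :=
      ⟨fun h p => h (p + 1), fun h p => by cases p <;> simp [h]⟩
    rw [shift]
    simp only [prefixLead_cons_succ]
    by_cases hax : a = x
    · subst hax
      refine iff_of_false (by simp [alternate_iff_isChain]) fun h => ?_
      have := h 0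
      simp [hxy] at this
    by_cases hay : a = y
    · subst hay
      have hhead : ∀ o : Option α, (∀ z ∈ o, a ≠ z) ↔ o ≠ some a := by
        intro o; cases o <;> simp [eq_comm]
      have := ih (Ne.symm hxy)
      rw [alternate_comm, filter_eq_or_comm] at this
      simp only [alternate_iff_isChain, List.filter_cons, decide_eq_true_eq, or_true, if_true,
        List.isChain_cons, hhead, List.head?_cons, ne_eq, Option.some.injEq,
        not_false_eq_true, and_true, hax, if_false, prefixLead_swap (x := a)] at this ⊢
      rw [and_comm, this]
      exact forall_congr' fun p => by omega
    · have := ih hxy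
      simp only [alternate_iff_isChain, List.filter_cons, hax, hay] at this ⊢
      simpa using this

theorem alternate_iff_prefixLead_le (w : List α) {x y : α} (hxy : x ≠ y) :
    Alternate w x y ↔ ∀ p q, prefixLead w x y p ≤ prefixLead w x y q + 1 := by
  constructor
  · intro halt p q
    by_cases hhead : (w.filter (fun z => z = x ∨ z = y)).head? = some x
    · have hhead' : (w.filter (fun z => z = y ∨ z = x)).head? ≠ some y := by
        rw [filter_eq_or_comm, hhead]; simpa using hxy
      have hbound := (alternate_and_head?_ne_iff w hxy.symm).1
        ⟨(alternate_comm w x y).1 halt, hhead'⟩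
      have := hbound p; have := hbound q
      simp only [prefixLead_swap (x := x)] at *
      omega
    · have hbound := (alternate_and_head?_ne_iff w hxy).1 ⟨halt, hhead⟩
      have := hbound p; have := hbound q
      omega
  · intro hle
    by_cases hpos : ∃ p, 0 < prefixLead w x y p
    · obtain ⟨p₀, hp₀⟩ := hpos
      refine (alternate_comm w x y).2 ((alternate_and_head?_ne_iff w hxy.symm).2 fun p => ?_).1
      have := hle p₀ p; have := hle p 0
      simp only [prefixLead_swap (x := x), prefixLead_zero] at *
      omega
    · push Not at hpos
      refine ((alternate_and_head?_ne_iff w hxy).2 fun p => ?_).1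
      have := hle 0 p; have := hpos p
      simp only [prefixLead_zero] at *
      omega

def Synced (w : List α) (h : α) (t : ℕ) (a : α) : Prop :=
  ∀ p, prefixLead w a h p ≤ prefixLead w a h t ∧ prefixLead w a h t ≤ prefixLead w a h p + 1

def GainsOn (w : List α) (t : ℕ) (a b : α) : Prop :=
  ∃ p, prefixLead w a b t < prefixLead w a b p

section Synced

variable {w : List α} {h : α} {t : ℕ} {a b c : α}

lemma synced_of_alternate (ht : w[t]? = some h) (hah : a ≠ h) (halt : Alternate w a h) :
    Synced w h t a := by
  have hstep := prefixLead_succ_of_getElem? (x := a) (y := h) ht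
  have hle := (alternate_iff_prefixLead_le w hah).1 halt
  simp only [hah.symm, if_false, if_true] at hstep
  exact fun p => ⟨by linarith [hle p (t + 1)], by linarith [hle t p]⟩

lemma gainsOn_or_gainsOn (hab : a ≠ b) (ha : a ∈ w) : GainsOn w t a b ∨ GainsOn w t b a := by
  obtain ⟨s, hs⟩ := List.mem_iff_getElem?.1 ha
  have hstep := prefixLead_succ_of_getElem? (x := a) (y := b) hs
  simp only [hab, if_false, if_true] at hstep
  by_cases hgain : prefixLead w a b t < prefixLead w a b (s + 1)
  · exact Or.inl ⟨s + 1, hgain⟩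
  · refine Or.inr ⟨s, ?_⟩
    simp only [prefixLead_swap (x := a)]
    omega

lemma alternate_iff_not_gainsOn_and_gainsOn (hab : a ≠ b) (ha : Synced w h t a)
    (hb : Synced w h t b) : Alternate w a b ↔ ¬(GainsOn w t a b ∧ GainsOn w t b a) := by
  simp only [alternate_iff_prefixLead_le w hab, GainsOn, prefixLead_swap (x := a),
    ← prefixLead_sub_prefixLead a b h]
  constructor
  · rintro hle ⟨⟨p, hp⟩, ⟨q, hq⟩⟩
    have := hle p q
    omega
  · intro hnot p q
    by_contra hgt
    have := ha p; have := hb p; have := ha q; have := hb q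
    exact hnot ⟨⟨p, by omega⟩, ⟨q, by omega⟩⟩

lemma GainsOn.cotrans (ha : Synced w h t a) (hb : Synced w h t b) (hc : Synced w h t c)
    (hca : GainsOn w t c a) : GainsOn w t c b ∨ GainsOn w t b a := by
  obtain ⟨p, hp⟩ := hca
  simp only [GainsOn, ← prefixLead_sub_prefixLead c a h, ← prefixLead_sub_prefixLead c b h,
    ← prefixLead_sub_prefixLead b a h] at hp ⊢
  have := ha p; have := hb p; have := hc p
  by_cases hbp : prefixLead w b h p = prefixLead w b h t
  · exact Or.inr ⟨p, by omega⟩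
  · exact Or.inl ⟨p, by omega⟩

end Synced

namespace SimpleGraph

/-- Since `G` is loopless, such an `r` is irreflexive, hence a strict partial order whose
comparability graph is `G`. -/
def IsComparabilityGraph (G : SimpleGraph V) : Prop :=
  ∃ r : V → V → Prop, IsTrans V r ∧ ∀ a b, G.Adj a b ↔ r a b ∨ r b a

lemma IsComparabilityGraph.comap {G : SimpleGraph V} {H : SimpleGraph W} (f : G ↪g H)
    (hH : H.IsComparabilityGraph) : G.IsComparabilityGraph := by
  obtain ⟨r, htrans, hadj⟩ := hH
  exact ⟨fun a b => r (f a) (f b), ⟨fun _ _ _ hab hbc => _root_.trans hab hbc⟩,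
    fun a b => by rw [← f.map_adj_iff, hadj]⟩

lemma cycleGraph_not_adj_add_one_add_one (m : ℕ) (u : Fin (m + 5)) :
    ¬(cycleGraph (m + 5)).Adj u (u + 1 + 1) := by
  have hsub : u - (u + 1 + 1) = -(1 + 1) := by abel
  have hsub' : u + 1 + 1 - u = 1 + 1 := by abel
  rw [cycleGraph_adj, hsub, hsub', neg_eq_iff_eq_neg]
  simp (disch := omega) only [Fin.ext_iff, Fin.val_neg, Fin.val_add, Fin.val_one', Nat.mod_eq_of_lt]
  norm_num

theorem cycleGraph_not_isComparabilityGraph {n : ℕ} (hodd : Odd n) (h5 : 5 ≤ n) :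
    ¬(cycleGraph n).IsComparabilityGraph := by
  classical
  rintro ⟨r, htrans, hadj⟩
  obtain ⟨m, rfl⟩ : ∃ m, n = m + 5 := ⟨n - 5, by omega⟩
  have hsucc (u : Fin (m + 5)) : (cycleGraph (m + 5)).Adj u (u + 1) := by
    simp [cycleGraph_adj]
  have hflip (u : Fin (m + 5)) : r u (u + 1) ↔ ¬r (u + 1) (u + 1 + 1) := by
    have hfar := cycleGraph_not_adj_add_one_add_one m u
    constructor
    · exact fun h₁ h₂ => hfar ((hadj _ _).2 (Or.inl (_root_.trans h₁ h₂)))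
    · intro h₂
      by_contra h₁
      have h₁' := ((hadj _ _).1 (hsucc u)).resolve_left h₁
      have h₂' := ((hadj _ _).1 (hsucc (u + 1))).resolve_left h₂
      exact hfar ((hadj _ _).2 (Or.inr (_root_.trans h₂' h₁')))
  let c : (cycleGraph (m + 5)).Coloring Bool := Coloring.mk (fun u => decide (r u (u + 1))) <| by
    intro u v huv
    rcases cycleGraph_adj.1 huv with h | h
    · rw [sub_eq_iff_eq_add'.1 h, hflip v]; simp
    · rw [sub_eq_iff_eq_add'.1 h, hflip u]; simp
  have hle := c.colorable.chromaticNumber_le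
  rw [chromaticNumber_cycleGraph_of_odd _ (by omega) hodd] at hle
  norm_num at hle

end SimpleGraph

open SimpleGraph

theorem WordRepresentable.isComparabilityGraph_induce_neighborSet [DecidableEq V]
    {G : SimpleGraph V} (hG : WordRepresentable G) (v : V) :
    (G.induce (G.neighborSet v)).IsComparabilityGraph := by
  obtain ⟨w, hmem, hrep⟩ := hG
  obtain ⟨t, ht⟩ := List.mem_iff_getElem?.1 (hmem v)
  have hsynced : ∀ a : G.neighborSet v, Synced w v t a := fun a =>
    synced_of_alternate ht (G.ne_of_adj a.2).symm ((hrep _ _ (G.ne_of_adj a.2).symm).2 a.2.symm)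
  refine ⟨fun a b => GainsOn w t a b ∧ ¬GainsOn w t b a, ⟨?_⟩, fun a b => ?_⟩
  · rintro a b c ⟨hab, hba⟩ ⟨hbc, hcb⟩
    refine ⟨(hab.cotrans (hsynced b) (hsynced c) (hsynced a)).resolve_right hcb, fun hca => ?_⟩
    exact (hca.cotrans (hsynced a) (hsynced b) (hsynced c)).elim hcb hba
  · rw [induce_adj]
    by_cases hab : a = b
    · subst hab; simp
    have hab' : (a : V) ≠ b := fun h => hab (Subtype.ext h)
    rw [← hrep _ _ hab', alternate_iff_not_gainsOn_and_gainsOn hab' (hsynced a) (hsynced b)]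
    have := gainsOn_or_gainsOn (t := t) hab' (hmem a)
    tauto

lemma wheel_adj_some {n : ℕ} {a b : Fin n} :
    (wheel n).Adj (some a) (some b) ↔
      a ≠ b ∧ ((a.val + 1) % n = b.val ∨ (b.val + 1) % n = a.val) := by
  simp [wheel]

def wheel.rimEmbedding (n : ℕ) :
    cycleGraph (n + 2) ↪g (wheel (n + 2)).induce ((wheel (n + 2)).neighborSet none) where
  toFun a := ⟨some a, by simp [wheel]⟩
  inj' a b h := by simpa using h
  map_rel_iff' {a b} := by
    rw [induce_adj]
    change (wheel (n + 2)).Adj (some a) (some b) ↔ _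
    rw [wheel_adj_some, cycleGraph_adj, sub_eq_iff_eq_add', sub_eq_iff_eq_add']
    have hmod (x : Fin (n + 2)) :
        (x.val + 1) % (n + 2) = if x.val + 1 = n + 2 then 0 else x.val + 1 := by
      split_ifs with hx
      · rw [hx, Nat.mod_self]
      · exact Nat.mod_eq_of_lt (by omega)
    simp only [ne_eq, Fin.ext_iff, Fin.val_add, Fin.val_one, hmod]
    split_ifs <;> omega

theorem wheel_not_wordRepresentable {n : ℕ} (hodd : Odd n) (h5 : 5 ≤ n) :
    ¬WordRepresentable (wheel n) := fun hG => by
  obtain ⟨m, rfl⟩ : ∃ m, n = m + 2 := ⟨n - 2, by omega⟩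
  exact cycleGraph_not_isComparabilityGraph hodd h5
    ((hG.isComparabilityGraph_induce_neighborSet none).comap (wheel.rimEmbedding m))

/-- The wheel graph `W 7` is not word-representable. -/
theorem wheel7_not_word_representable : ¬ WordRepresentable (wheel 7) :=
  wheel_not_wordRepresentable (by decide) (by norm_num)
end

section
/- Let m ≥ 4 and n ≥ 1, and let T be a triangulation of the grid-covered cylinder graph G_{m,n} in which every layer L_i (2 ≤ i ≤ n) has all its cells of the same type. Then the orientation O of T defined as follows is semi-transitive: (1) horizontal edges: for all 0 ≤ x ≤ n, orient v_{x0} → v_{x(m−1)}, v_{x(m−1)} → v_{x(m−2)}, and v_{xy} → v_{x(y+1)} for 0 ≤ y ≤ m−3; (2) each diagonal edge is oriented in the same direction as the horizontal edges of the cell it belongs to (i.e., all horizontal and diagonal edges within a sector have the same direction); (3) vertical edges: orient v_{0y} → v_{1y} for all 0 ≤ y ≤ m−1, and for 1 ≤ x ≤ n−1 and 0 ≤ y ≤ m−1, the edge between v_{xy} and v_{(x+1)y} is given the same direction as the edge between v_{(x−1)y} and v_{xy} if layer L_{x+1} is of type A, and the opposite direction if L_{x+1} is of type B. -/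
/-- The grid-covered cylinder graph `G_{m,n}` on vertices `(i, j)` with level
`i ∈ {0,...,n}` and column `j ∈ {0,...,m-1}`: horizontal edges join `(i, j)` and
`(i, (j+1) mod m)`, vertical edges join `(i, j)` and `(i+1, j)`. -/
def gccg (m n : ℕ) : SimpleGraph (Fin (n + 1) × Fin m) where
  Adj u v := u ≠ v ∧
    ((u.1 = v.1 ∧ ((u.2.val + 1) % m = v.2.val ∨ (v.2.val + 1) % m = u.2.val)) ∨
     (u.2 = v.2 ∧ (u.1.val + 1 = v.1.val ∨ v.1.val + 1 = u.1.val)))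
  symm := by
    refine ⟨?_⟩
    rintro u v ⟨hne, h | h⟩
    · exact ⟨hne.symm, Or.inl ⟨h.1.symm, h.2.symm⟩⟩
    · exact ⟨hne.symm, Or.inr ⟨h.1.symm, h.2.symm⟩⟩
  loopless := ⟨fun u h => h.1 rfl⟩

/-- The two endpoints (as `(level, column)` pairs) of the chosen diagonal of the cell with
lower-left corner `(i, j)`: `true` selects the diagonal `(i,j)—(i+1,(j+1) mod m)`, and
`false` selects the diagonal `(i+1,j)—(i,(j+1) mod m)`. -/
def cellDiag (m : ℕ) (b : Bool) (i j : ℕ) : (ℕ × ℕ) × (ℕ × ℕ) :=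
  if b then ((i, j), (i + 1, (j + 1) % m)) else ((i + 1, j), (i, (j + 1) % m))

/-- `u` and `v` (as `(level, column)` pairs) are the endpoints of the diagonal added to
some cell, where `d i j = some b` means the cell `(i, j)` gets the diagonal selected by
`b`, and `d i j = none` means the cell `(i, j)` gets no diagonal. -/
def DiagAdj (m n : ℕ) (d : ℕ → ℕ → Option Bool) (u v : ℕ × ℕ) : Prop :=
  ∃ i < n, ∃ j < m, ∃ b : Bool, d i j = some b ∧
    ((u, v) = cellDiag m b i j ∨ (v, u) = cellDiag m b i j)

/-- The graph obtained from the grid-covered cylinder graph `G_{m,n}` by adding, in each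
cell `(i,j)` with `d i j = some b`, the diagonal selected by `b` (cells with
`d i j = none` are left untriangulated). -/
def ptri (m n : ℕ) (d : ℕ → ℕ → Option Bool) : SimpleGraph (Fin (n + 1) × Fin m) where
  Adj u v := (gccg m n).Adj u v ∨ DiagAdj m n d (u.1.val, u.2.val) (v.1.val, v.2.val)
  symm := by
    refine ⟨?_⟩
    rintro u v (h | ⟨i, hi, j, hj, b, hb, h⟩)
    · exact Or.inl ((gccg m n).adj_symm h)
    · exact Or.inr ⟨i, hi, j, hj, b, hb, h.symm⟩
  loopless := by
    refine ⟨?_⟩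
    rintro u (h | ⟨i, hi, j, hj, b, hb, h⟩)
    · exact (gccg m n).irrefl h
    · rcases h with h | h <;> cases b <;> simp [cellDiag] at h <;> omega

/-- A (full) triangulation of the grid-covered cylinder graph `G_{m,n}`: every cell gets
exactly one diagonal, chosen by `d`. -/
def tri (m n : ℕ) (d : ℕ → ℕ → Bool) : SimpleGraph (Fin (n + 1) × Fin m) :=
  ptri m n (fun i j => some (d i j))

/-- The set of the two endpoints (as `(level, column)` pairs) of the diagonal of cell
`(i, j)` in the full triangulation determined by `d`. -/
def diagEndsSet (m : ℕ) (d : ℕ → ℕ → Bool) (i j : ℕ) : Set (ℕ × ℕ) :=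
  if d i j then {(i, j), (i + 1, (j + 1) % m)} else {(i + 1, j), (i, (j + 1) % m)}

/-- Cell `(i, j)` (meaningful for `1 ≤ i`, i.e. for cells on layers `L 2, ..., L n`) is of
type A if its diagonal has no vertex in common with the diagonal of the cell `(i-1, j)`
directly below it; it is of type B otherwise. -/
def CellTypeA (m : ℕ) (d : ℕ → ℕ → Bool) (i j : ℕ) : Prop :=
  ∀ p ∈ diagEndsSet m d i j, p ∉ diagEndsSet m d (i - 1) j

/-- The column at which the oriented horizontal edges of sector `j` (the sector whose
horizontal edges join columns `j` and `(j+1) mod m`) start: the horizontal arcs are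
`v x 0 → v x (m-1)`, `v x (m-1) → v x (m-2)` and `v x y → v x (y+1)` for `y ≤ m - 3`. -/
def hsrc (m j : ℕ) : ℕ :=
  if j = m - 1 then 0 else if j = m - 2 then m - 1 else j

/-- The column at which the oriented horizontal edges of sector `j` end. -/
def hdst (m j : ℕ) : ℕ :=
  if j = m - 1 then m - 1 else if j = m - 2 then m - 2 else j + 1

/-- The level of the endpoint of the diagonal of cell `(i, j)` that lies on column `c`
(meaningful for `c ∈ {j, (j+1) mod m}`, the two columns of sector `j`). -/
def diagLevel (d : ℕ → ℕ → Bool) (i j c : ℕ) : ℕ :=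
  if c = j then (if d i j then i else i + 1) else (if d i j then i + 1 else i)

/-- A layer (given by its cell index `x`, i.e. layer `L (x+1)`) is of type A if all of its
cells are of type A. -/
def LayerTypeA (m : ℕ) (d : ℕ → ℕ → Bool) (x : ℕ) : Prop :=
  ∀ j < m, CellTypeA m d x j

open Classical in
/-- The direction of the vertical edges between levels `x` and `x + 1` in the orientation
`O`: `true` means upward (`v x y → v (x+1) y`), `false` means downward. The edges
`v 0 y → v 1 y` point upward, and the direction is kept when passing to a layer of type A
and reversed when passing to a layer of type B. -/
noncomputable def vdir (m : ℕ) (d : ℕ → ℕ → Bool) : ℕ → Bool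
  | 0 => true
  | x + 1 => if LayerTypeA m d (x + 1) then vdir m d x else !(vdir m d x)

/-- The orientation `O` of the triangulation `tri m n d`: horizontal edges are oriented
`v x 0 → v x (m-1)`, `v x (m-1) → v x (m-2)` and `v x y → v x (y+1)` for `0 ≤ y ≤ m-3`;
every diagonal edge is oriented in the same direction (from column `hsrc m j` to column
`hdst m j`) as the horizontal edges of the sector of the cell it belongs to; vertical
edges are oriented according to `vdir`. -/
def Orient (m n : ℕ) (d : ℕ → ℕ → Bool) (u v : Fin (n + 1) × Fin m) : Prop :=
  -- horizontal arcs
  (u.1 = v.1 ∧ ((u.2.val = 0 ∧ v.2.val = m - 1) ∨ (u.2.val = m - 1 ∧ v.2.val = m - 2) ∨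
      (u.2.val + 2 ≤ m - 1 ∧ v.2.val = u.2.val + 1))) ∨
  -- diagonal arcs
  (∃ i < n, ∃ j < m,
      u.2.val = hsrc m j ∧ v.2.val = hdst m j ∧
      u.1.val = diagLevel d i j (hsrc m j) ∧ v.1.val = diagLevel d i j (hdst m j)) ∨
  -- vertical arcs
  (u.2 = v.2 ∧ ((v.1.val = u.1.val + 1 ∧ vdir m d u.1.val = true) ∨
                (u.1.val = v.1.val + 1 ∧ vdir m d v.1.val = false)))

/-!
Every vertical arc raises a height function on the levels by one, and every other arc crosses a
sector from column `hsrc m j` to column `hdst m j`, raising both of two linear ranks of the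
columns, one of them by exactly one; a lexicographic potential then gives acyclicity.
Because every layer is uniform, going up one cell the diagonal of a sector flips exactly when the
vertical direction flips, so all diagonals of a sector change the height by the same amount `±1`.
Hence a directed path whose ends are joined by an arc crosses at most one sector, and comparing
the heights gained along the path and along that arc bounds its length by two.
-/

namespace GridCylinder

variable {m n : ℕ} {d : ℕ → ℕ → Bool}

lemma succ_mod_eq {j : ℕ} (hj : j < m) : (j + 1) % m = if j = m - 1 then 0 else j + 1 := by
  split_ifs with h
  · rw [show j + 1 = m by omega, Nat.mod_self]
  · exact Nat.mod_eq_of_lt (by omega)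

def ColArc (m a b : ℕ) : Prop :=
  (a = 0 ∧ b = m - 1) ∨ (a = m - 1 ∧ b = m - 2) ∨ (a + 2 ≤ m - 1 ∧ b = a + 1)

lemma ColArc.ne (hm : 2 ≤ m) {a b : ℕ} (h : ColArc m a b) : a ≠ b := by
  unfold ColArc at h; omega

lemma colArc_or_colArc_iff (hm : 3 ≤ m) {a b : ℕ} (ha : a < m) (hb : b < m) :
    ColArc m a b ∨ ColArc m b a ↔ (a + 1) % m = b ∨ (b + 1) % m = a := by
  rw [succ_mod_eq ha, succ_mod_eq hb, ColArc, ColArc]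
  split_ifs <;> omega

lemma ColArc.exists_sector (hm : 2 ≤ m) {a b : ℕ} (h : ColArc m a b) :
    ∃ j < m, a = hsrc m j ∧ b = hdst m j := by
  rcases h with ⟨rfl, rfl⟩ | ⟨rfl, rfl⟩ | ⟨ha, rfl⟩
  · exact ⟨m - 1, by omega, by simp [hsrc], by simp [hdst]⟩
  · exact ⟨m - 2, by omega, by simp only [hsrc]; split_ifs <;> omega,
      by simp only [hdst]; split_ifs <;> omega⟩
  · exact ⟨a, by omega, by simp only [hsrc]; split_ifs <;> omega,
      by simp only [hdst]; split_ifs <;> omega⟩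

lemma hsrc_eq_or_hdst_eq (hm : 2 ≤ m) (j : ℕ) :
    (hsrc m j = j ∧ hdst m j ≠ j) ∨ (hsrc m j ≠ j ∧ hdst m j = j) := by
  simp only [hsrc, hdst]; split_ifs <;> omega

lemma sector_eq_of_hsrc_eq_of_hdst_eq (hm : 2 ≤ m) {j j' : ℕ} (hj : j < m) (hj' : j' < m)
    (hs : hsrc m j = hsrc m j') (ht : hdst m j = hdst m j') : j = j' := by
  simp only [hsrc, hdst] at hs ht
  split_ifs at hs ht <;> omega

/-- `earlyRank` and `lateRank` are the two linear extensions of the column order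
`0 → 1 → ⋯ → m-2`, `0 → m-1 → m-2` placing column `m-1` as early and as late as possible. -/
def earlyRank (m y : ℕ) : ℕ := if y = m - 1 then 1 else y

def lateRank (m y : ℕ) : ℕ := if y = m - 1 then m - 3 else y

lemma ranks_lt_of_sector (hm : 4 ≤ m) {j : ℕ} (hj : j < m) :
    earlyRank m (hsrc m j) < earlyRank m (hdst m j) ∧
      lateRank m (hsrc m j) < lateRank m (hdst m j) := by
  simp only [hsrc, hdst, earlyRank, lateRank]
  split_ifs <;> omega

/-- This is what rules out a shortcut across two sectors. -/
lemma rank_succ_of_sector (hm : 4 ≤ m) {j : ℕ} (hj : j < m) :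
    earlyRank m (hdst m j) = earlyRank m (hsrc m j) + 1 ∨
      lateRank m (hdst m j) = lateRank m (hsrc m j) + 1 := by
  simp only [hsrc, hdst, earlyRank, lateRank]
  split_ifs <;> omega

/-- Every vertical arc of `Orient` climbs one unit of `height`, whichever way it points. -/
noncomputable def height (m : ℕ) (d : ℕ → ℕ → Bool) : ℕ → ℤ
  | 0 => 0
  | x + 1 => height m d x + if vdir m d x then 1 else -1

lemma height_of_vertical {x y : ℕ}
    (h : (y = x + 1 ∧ vdir m d x = true) ∨ (x = y + 1 ∧ vdir m d y = false)) :
    height m d y = height m d x + 1 := by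
  rcases h with ⟨rfl, h⟩ | ⟨rfl, h⟩ <;> simp [height, h]

lemma cellTypeA_succ_iff (hm : 2 ≤ m) {j : ℕ} (hj : j < m) (x : ℕ) :
    CellTypeA m d (x + 1) j ↔ d (x + 1) j = d x j := by
  have hj' : (j + 1) % m ≠ j := by rw [succ_mod_eq hj]; split_ifs <;> omega
  simp only [CellTypeA, diagEndsSet, Nat.add_sub_cancel]
  generalize (j + 1) % m = c at hj'
  cases d (x + 1) j <;> cases d x j <;> simp only [Bool.false_eq_true, if_true, if_false,
    Set.mem_insert_iff, Set.mem_singleton_iff, Prod.ext_iff, reduceCtorEq, iff_false, iff_true]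
  · intros; omega
  · exact fun h => h (x + 1, c) (by simp) (by simp)
  · exact fun h => h (x + 1, j) (by simp) (by simp)
  · intros; omega

def LayersUniform (m n : ℕ) (d : ℕ → ℕ → Bool) : Prop :=
  ∀ x : ℕ, 1 ≤ x → x < n → (∀ j < m, CellTypeA m d x j) ∨ (∀ j < m, ¬ CellTypeA m d x j)

lemma vdir_succ_eq_iff (hu : LayersUniform m n d) (hm : 2 ≤ m) {j x : ℕ} (hj : j < m)
    (hx : x + 1 < n) : vdir m d (x + 1) = vdir m d x ↔ d (x + 1) j = d x j := by
  have hlayer : LayerTypeA m d (x + 1) ↔ CellTypeA m d (x + 1) j :=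
    ⟨fun h => h j hj, fun h => (hu (x + 1) (by omega) hx).resolve_right fun h' => h' j hj h⟩
  rw [← cellTypeA_succ_iff hm hj, ← hlayer, vdir]
  split_ifs with h <;> simp [h]

noncomputable def sectorSlope (m : ℕ) (d : ℕ → ℕ → Bool) (j : ℕ) : ℤ :=
  height m d (diagLevel d 0 j (hdst m j)) - height m d (diagLevel d 0 j (hsrc m j))

lemma abs_sectorSlope_le_one (j : ℕ) : |sectorSlope m d j| ≤ 1 := by
  rw [abs_le]
  unfold sectorSlope diagLevel
  split_ifs <;> simp [height, vdir]

/-- Going up one cell, the diagonal flips exactly when the vertical direction flips, so the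
height gained along the diagonal is unchanged. -/
lemma height_diag_succ (hu : LayersUniform m n d) (hm : 2 ≤ m) {i j : ℕ} (hj : j < m)
    (hi : i + 1 < n) :
    height m d (diagLevel d (i + 1) j (hdst m j)) - height m d (diagLevel d (i + 1) j (hsrc m j)) =
      height m d (diagLevel d i j (hdst m j)) - height m d (diagLevel d i j (hsrc m j)) := by
  have hflip := vdir_succ_eq_iff hu hm hj hi
  rcases hsrc_eq_or_hdst_eq hm j with ⟨hs, ht⟩ | ⟨hs, ht⟩ <;>
    simp only [diagLevel, hs, ht, if_true, if_false] <;>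
    cases hd1 : d (i + 1) j <;> cases hd0 : d i j <;> cases hv1 : vdir m d (i + 1) <;>
    cases hv0 : vdir m d i <;> simp_all [height]

lemma height_diag_eq_sectorSlope (hu : LayersUniform m n d) (hm : 2 ≤ m) {i j : ℕ} (hj : j < m)
    (hi : i < n) :
    height m d (diagLevel d i j (hdst m j)) - height m d (diagLevel d i j (hsrc m j)) =
      sectorSlope m d j := by
  induction i with
  | zero => rfl
  | succ i ih => rw [height_diag_succ hu hm hj hi, ih (by omega)]

lemma orient_cases (hm : 4 ≤ m) {u v : Fin (n + 1) × Fin m} (h : Orient m n d u v) :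
    (u.2 = v.2 ∧ height m d v.1 = height m d u.1 + 1) ∨
      ∃ j < m, u.2.val = hsrc m j ∧ v.2.val = hdst m j ∧ (u.1 = v.1 ∨
        ∃ i < n, u.1.val = diagLevel d i j (hsrc m j) ∧ v.1.val = diagLevel d i j (hdst m j)) := by
  rcases h with ⟨hlev, hcol⟩ | ⟨i, hi, j, hj, hs, ht, hls, hlt⟩ | ⟨hcol, hlev⟩
  · obtain ⟨j, hj, hs, ht⟩ := ColArc.exists_sector (by omega) hcol
    exact Or.inr ⟨j, hj, hs, ht, Or.inl hlev⟩
  · exact Or.inr ⟨j, hj, hs, ht, Or.inr ⟨i, hi, hls, hlt⟩⟩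
  · exact Or.inl ⟨hcol, height_of_vertical hlev⟩

lemma orient_height_cases (hu : LayersUniform m n d) (hm : 4 ≤ m) {u v : Fin (n + 1) × Fin m}
    (h : Orient m n d u v) :
    (u.2 = v.2 ∧ height m d v.1 = height m d u.1 + 1) ∨
      ∃ j < m, u.2.val = hsrc m j ∧ v.2.val = hdst m j ∧
        (height m d v.1 = height m d u.1 ∨ height m d v.1 = height m d u.1 + sectorSlope m d j) := by
  rcases orient_cases hm h with hvert | ⟨j, hj, hs, ht, hlev | ⟨i, hi, hls, hlt⟩⟩
  · exact Or.inl hvert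
  · exact Or.inr ⟨j, hj, hs, ht, Or.inl (by rw [hlev])⟩
  · have := height_diag_eq_sectorSlope hu (by omega) hj hi
    rw [← hls, ← hlt] at this
    exact Or.inr ⟨j, hj, hs, ht, Or.inr (by linarith)⟩

noncomputable def potential (m n : ℕ) (d : ℕ → ℕ → Bool) (u : Fin (n + 1) × Fin m) : ℕ ×ₗ ℤ :=
  toLex (earlyRank m u.2.val, height m d u.1.val)

lemma potential_lt_of_orient (hm : 4 ≤ m) {u v : Fin (n + 1) × Fin m} (h : Orient m n d u v) :
    potential m n d u < potential m n d v := by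
  rw [potential, potential, Prod.Lex.toLex_lt_toLex]
  rcases orient_cases hm h with ⟨hcol, hheight⟩ | ⟨j, hj, hs, ht, -⟩
  · exact Or.inr ⟨by rw [hcol], by omega⟩
  · exact Or.inl (by rw [hs, ht]; exact (ranks_lt_of_sector hm hj).1)

lemma orient_asymm (hm : 4 ≤ m) {u v : Fin (n + 1) × Fin m} (h : Orient m n d u v) :
    ¬ Orient m n d v u :=
  fun h' => (potential_lt_of_orient hm h).not_gt (potential_lt_of_orient hm h')

lemma orient_acyclic (hm : 4 ≤ m) : DigraphAcyclic (Orient m n d) := by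
  intro u hu
  have hlt : Relation.TransGen (· < ·) (potential m n d u) (potential m n d u) :=
    Relation.TransGen.lift (potential m n d) (fun _ _ => potential_lt_of_orient hm) u u hu
  rw [Relation.transGen_eq_self] at hlt
  exact lt_irrefl _ hlt

lemma cellDiag_eq_or_swap (hm : 2 ≤ m) {j : ℕ} (hj : j < m) (i : ℕ) :
    cellDiag m (d i j) i j =
        ((diagLevel d i j (hsrc m j), hsrc m j), (diagLevel d i j (hdst m j), hdst m j)) ∨
      cellDiag m (d i j) i j =
        ((diagLevel d i j (hdst m j), hdst m j), (diagLevel d i j (hsrc m j), hsrc m j)) := by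
  rw [cellDiag, diagLevel, diagLevel, succ_mod_eq hj]
  simp only [hsrc, hdst]
  split_ifs <;> simp only [Prod.mk.injEq, true_and, and_true, true_or] <;> omega

lemma horizontal_adj_iff (hm : 3 ≤ m) (u v : Fin (n + 1) × Fin m) :
    (u ≠ v ∧ u.1 = v.1 ∧ ((u.2.val + 1) % m = v.2.val ∨ (v.2.val + 1) % m = u.2.val)) ↔
      (u.1 = v.1 ∧ ColArc m u.2.val v.2.val) ∨ (v.1 = u.1 ∧ ColArc m v.2.val u.2.val) := by
  rw [← colArc_or_colArc_iff hm u.2.isLt v.2.isLt]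
  constructor
  · rintro ⟨-, hlev, hcol | hcol⟩
    exacts [Or.inl ⟨hlev, hcol⟩, Or.inr ⟨hlev.symm, hcol⟩]
  · rintro (⟨hlev, hcol⟩ | ⟨hlev, hcol⟩)
    · exact ⟨fun h => hcol.ne (by omega) (by rw [h]), hlev, Or.inl hcol⟩
    · exact ⟨fun h => hcol.ne (by omega) (by rw [h]), hlev.symm, Or.inr hcol⟩

lemma vertical_adj_iff (u v : Fin (n + 1) × Fin m) :
    (u ≠ v ∧ u.2 = v.2 ∧ (u.1.val + 1 = v.1.val ∨ v.1.val + 1 = u.1.val)) ↔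
      (u.2 = v.2 ∧ ((v.1.val = u.1.val + 1 ∧ vdir m d u.1.val = true) ∨
          (u.1.val = v.1.val + 1 ∧ vdir m d v.1.val = false))) ∨
        (v.2 = u.2 ∧ ((u.1.val = v.1.val + 1 ∧ vdir m d v.1.val = true) ∨
          (v.1.val = u.1.val + 1 ∧ vdir m d u.1.val = false))) := by
  constructor
  · rintro ⟨-, hcol, hlev⟩
    cases hu : vdir m d u.1.val <;> cases hv : vdir m d v.1.val <;> simp [hcol] <;> omega
  · rintro (⟨hcol, hlev⟩ | ⟨hcol, hlev⟩)
    · exact ⟨fun h => by rw [h] at hlev; omega, hcol, by omega⟩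
    · exact ⟨fun h => by rw [h] at hlev; omega, hcol.symm, by omega⟩

lemma diagAdj_iff (hm : 2 ≤ m) (u v : Fin (n + 1) × Fin m) :
    DiagAdj m n (fun i j => some (d i j)) (u.1.val, u.2.val) (v.1.val, v.2.val) ↔
      (∃ i < n, ∃ j < m, u.2.val = hsrc m j ∧ v.2.val = hdst m j ∧
          u.1.val = diagLevel d i j (hsrc m j) ∧ v.1.val = diagLevel d i j (hdst m j)) ∨
        (∃ i < n, ∃ j < m, v.2.val = hsrc m j ∧ u.2.val = hdst m j ∧
          v.1.val = diagLevel d i j (hsrc m j) ∧ u.1.val = diagLevel d i j (hdst m j)) := by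
  simp only [DiagAdj, Option.some.injEq, exists_eq_left']
  constructor
  · rintro ⟨i, hi, j, hj, h⟩
    rcases cellDiag_eq_or_swap (d := d) hm hj i with hc | hc <;>
      simp only [hc, Prod.ext_iff] at h <;> rcases h with h | h
    exacts [Or.inl ⟨i, hi, j, hj, by omega⟩, Or.inr ⟨i, hi, j, hj, by omega⟩,
      Or.inr ⟨i, hi, j, hj, by omega⟩, Or.inl ⟨i, hi, j, hj, by omega⟩]
  · rintro (⟨i, hi, j, hj, h⟩ | ⟨i, hi, j, hj, h⟩) <;> refine ⟨i, hi, j, hj, ?_⟩ <;>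
      rcases cellDiag_eq_or_swap (d := d) hm hj i with hc | hc <;>
      simp only [hc, Prod.ext_iff] <;> omega

lemma tri_adj_iff (hm : 4 ≤ m) (u v : Fin (n + 1) × Fin m) :
    (tri m n d).Adj u v ↔ Orient m n d u v ∨ Orient m n d v u := by
  change ((u ≠ v ∧ (_ ∨ _)) ∨ DiagAdj _ _ _ _ _) ↔ _
  rw [and_or_left, horizontal_adj_iff (by omega), vertical_adj_iff, diagAdj_iff (by omega)]
  exact (by tauto : ∀ a b c d e f : Prop,
    ((a ∨ b) ∨ c ∨ d) ∨ e ∨ f ↔ (a ∨ e ∨ c) ∨ (b ∨ f ∨ d)) _ _ _ _ _ _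

/-- The three shapes of a directed path of length `t` from `u` to `v`: vertical arcs only,
exactly one arc across a sector, or arcs across at least two sectors. -/
def PathShape (m n : ℕ) (d : ℕ → ℕ → Bool) (u v : Fin (n + 1) × Fin m) (t : ℕ) : Prop :=
  (u.2 = v.2 ∧ height m d v.1 = height m d u.1 + t) ∨
    (∃ j < m, u.2.val = hsrc m j ∧ v.2.val = hdst m j ∧
      (height m d v.1 = height m d u.1 + (t - 1) ∨
        height m d v.1 = height m d u.1 + (t - 1) + sectorSlope m d j)) ∨
    (earlyRank m u.2.val + 2 ≤ earlyRank m v.2.val ∧ lateRank m u.2.val + 2 ≤ lateRank m v.2.val)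

lemma PathShape.snoc (hu : LayersUniform m n d) (hm : 4 ≤ m) {u v w : Fin (n + 1) × Fin m}
    {t : ℕ} (hshape : PathShape m n d u v t) (harc : Orient m n d v w) :
    PathShape m n d u w (t + 1) := by
  rcases orient_height_cases hu hm harc with ⟨hcol, hheight⟩ | ⟨j, hj, hs, ht, hheight⟩
  · rcases hshape with ⟨hcol', hheight'⟩ | ⟨j', hj', hs', ht', hheight'⟩ | hranks
    · exact Or.inl ⟨hcol'.trans hcol, by push_cast; linarith⟩
    · exact Or.inr (Or.inl ⟨j', hj', hs', by rw [← hcol, ht'], by push_cast; omega⟩)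
    · exact Or.inr (Or.inr (by rw [← hcol]; exact hranks))
  · have hranks := ranks_lt_of_sector hm hj
    rw [← hs, ← ht] at hranks
    rcases hshape with ⟨hcol', hheight'⟩ | ⟨j', hj', hs', ht', -⟩ | hranks'
    · exact Or.inr (Or.inl ⟨j, hj, by rw [hcol', hs], ht, by push_cast; omega⟩)
    · have hranks' := ranks_lt_of_sector hm hj'
      rw [← hs', ← ht'] at hranks'
      exact Or.inr (Or.inr ⟨by omega, by omega⟩)
    · exact Or.inr (Or.inr ⟨by omega, by omega⟩)

lemma pathShape_of_path (hu : LayersUniform m n d) (hm : 4 ≤ m) {k : ℕ}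
    {p : Fin (k + 1) → Fin (n + 1) × Fin m}
    (hpath : ∀ i : Fin k, Orient m n d (p i.castSucc) (p i.succ)) (t : ℕ) (ht : t ≤ k) :
    PathShape m n d (p 0) (p ⟨t, by omega⟩) t := by
  induction t with
  | zero => exact Or.inl ⟨rfl, by simp⟩
  | succ t ih => exact (ih (by omega)).snoc hu hm (hpath ⟨t, by omega⟩)

lemma length_le_two_of_shortcut (hu : LayersUniform m n d) (hm : 4 ≤ m) {k : ℕ}
    {p : Fin (k + 1) → Fin (n + 1) × Fin m}
    (hpath : ∀ i : Fin k, Orient m n d (p i.castSucc) (p i.succ))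
    (hshort : Orient m n d (p 0) (p (Fin.last k))) : k ≤ 2 := by
  have hshape : PathShape m n d (p 0) (p (Fin.last k)) k := pathShape_of_path hu hm hpath k le_rfl
  rcases orient_height_cases hu hm hshort with ⟨hcol, hheight⟩ | ⟨j, hj, hs, ht, hheight⟩
  · rcases hshape with ⟨-, hheight'⟩ | ⟨j', hj', hs', ht', -⟩ | hranks
    · omega
    · have := (ranks_lt_of_sector hm hj').1
      rw [← hs', ← ht', hcol] at this
      omega
    · rw [hcol] at hranks
      omega
  · have hranks := ranks_lt_of_sector hm hj
    rw [← hs, ← ht] at hranks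
    rcases hshape with ⟨hcol, -⟩ | ⟨j', hj', hs', ht', hheight'⟩ | hranks'
    · rw [hcol] at hranks
      omega
    · obtain rfl : j' = j := sector_eq_of_hsrc_eq_of_hdst_eq (by omega) hj' hj
        (by rw [← hs', hs]) (by rw [← ht', ← ht])
      have hslope := abs_le.1 (abs_sectorSlope_le_one (m := m) (d := d) j')
      omega
    · have := rank_succ_of_sector hm hj
      rw [← hs, ← ht] at this
      omega

lemma shortcutFree_of_length_le_two {V : Type*} {D : V → V → Prop}
    (h : ∀ (k : ℕ) (p : Fin (k + 1) → V), (∀ i : Fin k, D (p i.castSucc) (p i.succ)) →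
      D (p 0) (p (Fin.last k)) → k ≤ 2) :
    ShortcutFree D := by
  intro k p hpath hshort i j hij
  have hk := h k p hpath hshort
  interval_cases k <;> fin_cases i <;> fin_cases j <;> simp at hij
  exacts [hshort, hpath 0, hshort, hpath 1]

end GridCylinder

theorem orientation_O_semi_transitive_general (m n : ℕ) (hm : 4 ≤ m)
    (d : ℕ → ℕ → Bool)
    (huniform : ∀ x : ℕ, 1 ≤ x → x < n →
      ((∀ j < m, CellTypeA m d x j) ∨ (∀ j < m, ¬ CellTypeA m d x j))) :
    IsOrientation (tri m n d) (Orient m n d) ∧ SemiTransitive (Orient m n d) :=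
  ⟨⟨fun _ _ => GridCylinder.orient_asymm hm, GridCylinder.tri_adj_iff hm⟩,
    GridCylinder.orient_acyclic hm,
    GridCylinder.shortcutFree_of_length_le_two fun _ _ =>
      GridCylinder.length_le_two_of_shortcut huniform hm⟩

/-- For a triangulation of a grid-covered cylinder graph with at least four sectors in
which every layer `L 2, ..., L n` has all its cells of the same type, the orientation `O`
is an orientation of the triangulation and is semi-transitive. -/
theorem orientation_O_semi_transitive (m n : ℕ) (hm : 4 ≤ m) (hn : 1 ≤ n)
    (d : ℕ → ℕ → Bool)
    (huniform : ∀ x : ℕ, 1 ≤ x → x < n →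
      ((∀ j < m, CellTypeA m d x j) ∨ (∀ j < m, ¬ CellTypeA m d x j))) :
    IsOrientation (tri m n d) (Orient m n d) ∧ SemiTransitive (Orient m n d) :=
  orientation_O_semi_transitive_general m n hm d huniform
end

section
/- The 9-vertex graph M with vertices 1,...,9 and edges {1,2}, {1,3}, {1,4}, {1,5}, {2,3}, {2,5}, {2,6}, {3,6}, {3,4}, {4,5}, {4,6}, {4,7}, {4,8}, {5,6}, {5,8}, {5,9}, {6,9}, {6,7}, {7,8}, {7,9}, {8,9} admits a semi-transitive orientation, namely the orientation 1→2, 1→3, 1→4, 1→5, 2→3, 2→5, 2→6, 3→6, 4→3, 4→5, 4→6, 4→7, 4→8, 5→6, 5→8, 5→9, 6→9, 7→6, 7→8, 7→9, 8→9 is semi-transitive; in particular M is word-representable. -/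
/-- The arcs of the given orientation of the 9-vertex graph `M`, with vertices `0,...,8`
representing `1,...,9`: `1→2, 1→3, 1→4, 1→5, 2→3, 2→5, 2→6, 3→6, 4→3, 4→5, 4→6, 4→7,
4→8, 5→6, 5→8, 5→9, 6→9, 7→6, 7→8, 7→9, 8→9` (here written 0-indexed). -/
def arcsM : List (Fin 9 × Fin 9) :=
  [(0, 1), (0, 2), (0, 3), (0, 4), (1, 2), (1, 4), (1, 5), (2, 5), (3, 2), (3, 4),
   (3, 5), (3, 6), (3, 7), (4, 5), (4, 7), (4, 8), (5, 8), (6, 5), (6, 7), (6, 8), (7, 8)]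

/-- The 9-vertex graph `M`, whose edges are the underlying undirected edges of `arcsM`:
`{1,2}, {1,3}, {1,4}, {1,5}, {2,3}, {2,5}, {2,6}, {3,6}, {3,4}, {4,5}, {4,6}, {4,7},
{4,8}, {5,6}, {5,8}, {5,9}, {6,9}, {6,7}, {7,8}, {7,9}, {8,9}` (0-indexed here). -/
def graphM : SimpleGraph (Fin 9) :=
  SimpleGraph.fromRel (fun a b => (a, b) ∈ arcsM)

/-- The given orientation of `M`. -/
def orientM (a b : Fin 9) : Prop := (a, b) ∈ arcsM

/-!
Every pair `x →⁺ y` on a directed path from `a` to `b` satisfies `a →* x →⁺ y →* b`, so an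
orientation is shortcut-free as soon as every such pair under an arc `a → b` is itself an arc.
For `M` this, and acyclicity, become finite checks once the transitive closure of the orientation
is written down. Word-representability is witnessed by an explicit word of length 18.
-/

section Paths

variable {V : Type*} {D : V → V → Prop}

theorem transGen_of_path {k : ℕ} {v : Fin (k + 1) → V}
    (hv : ∀ i : Fin k, D (v i.castSucc) (v i.succ)) :
    ∀ {i j : Fin (k + 1)}, i < j → Relation.TransGen D (v i) (v j) := by
  intro i j
  induction j using Fin.induction with
  | zero => exact fun h => absurd h (Fin.not_lt_zero i)
  | succ j ih =>
    intro hij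
    rcases (Fin.le_castSucc_iff.mpr hij).eq_or_lt with heq | hlt
    · exact heq ▸ .single (hv j)
    · exact (ih hlt).tail (hv j)

theorem reflTransGen_of_path {k : ℕ} {v : Fin (k + 1) → V}
    (hv : ∀ i : Fin k, D (v i.castSucc) (v i.succ)) {i j : Fin (k + 1)} (hij : i ≤ j) :
    Relation.ReflTransGen D (v i) (v j) := by
  rcases hij.eq_or_lt with rfl | hlt
  · exact .refl
  · exact (transGen_of_path hv hlt).to_reflTransGen

theorem ShortcutFree.of_transGen_between
    (h : ∀ a b x y, D a b → Relation.ReflTransGen D a x → Relation.TransGen D x y →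
      Relation.ReflTransGen D y b → D x y) :
    ShortcutFree D := fun _ _ hv hshort i j hij =>
  h _ _ _ _ hshort (reflTransGen_of_path hv (Fin.zero_le i)) (transGen_of_path hv hij)
    (reflTransGen_of_path hv (Fin.le_last j))

end Paths

/-- The transitive closure of `orientM`, listed explicitly. -/
def reachableM : List (Fin 9 × Fin 9) :=
  [(0, 1), (0, 2), (0, 3), (0, 4), (0, 5), (0, 6), (0, 7), (0, 8), (1, 2), (1, 4),
   (1, 5), (1, 7), (1, 8), (2, 5), (2, 8), (3, 2), (3, 4), (3, 5), (3, 6), (3, 7),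
   (3, 8), (4, 5), (4, 7), (4, 8), (5, 8), (6, 5), (6, 7), (6, 8), (7, 8)]

theorem mem_reachableM_of_transGen {a b : Fin 9} (h : Relation.TransGen orientM a b) :
    (a, b) ∈ reachableM := by
  have arc_mem : ∀ a b : Fin 9, (a, b) ∈ arcsM → (a, b) ∈ reachableM := by decide
  have tail_mem : ∀ a b c : Fin 9, (a, b) ∈ reachableM → (b, c) ∈ arcsM →
      (a, c) ∈ reachableM := by decide
  induction h with
  | single hab => exact arc_mem _ _ hab
  | tail _ hbc ih => exact tail_mem _ _ _ ih hbc

theorem mem_reachableM_of_reflTransGen {a b : Fin 9} (h : Relation.ReflTransGen orientM a b) :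
    b = a ∨ (a, b) ∈ reachableM :=
  (Relation.reflTransGen_iff_eq_or_transGen.mp h).imp_right mem_reachableM_of_transGen

theorem digraphAcyclic_orientM : DigraphAcyclic orientM := fun a h =>
  (by decide : ∀ a : Fin 9, (a, a) ∉ reachableM) a (mem_reachableM_of_transGen h)

theorem shortcutFree_orientM : ShortcutFree orientM := by
  have between : ∀ p ∈ arcsM, ∀ x y : Fin 9, (x = p.1 ∨ (p.1, x) ∈ reachableM) →
      (x, y) ∈ reachableM → (p.2 = y ∨ (y, p.2) ∈ reachableM) → (x, y) ∈ arcsM := by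
    decide
  refine ShortcutFree.of_transGen_between fun a b x y hab hax hxy hyb => ?_
  exact between (a, b) hab x y (mem_reachableM_of_reflTransGen hax)
    (mem_reachableM_of_transGen hxy) (mem_reachableM_of_reflTransGen hyb)

theorem graphM_adj_iff (x y : Fin 9) : graphM.Adj x y ↔ orientM x y ∨ orientM y x := by
  refine SimpleGraph.fromRel_adj _ x y |>.trans (and_iff_right_of_imp ?_)
  exact (by decide : ∀ x y : Fin 9, (x, y) ∈ arcsM ∨ (y, x) ∈ arcsM → x ≠ y) x y

def wordM : List (Fin 9) := [2, 5, 8, 0, 3, 6, 1, 4, 2, 5, 0, 1, 7, 3, 2, 8, 4, 0]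

set_option linter.deprecated false in
theorem alternate_wordM_iff {x y : Fin 9} (hxy : x ≠ y) :
    Alternate wordM x y ↔ graphM.Adj x y := by
  revert x y
  unfold Alternate List.Chain' graphM
  simp only [SimpleGraph.fromRel_adj]
  decide

/-- The orientation `orientM` of the graph `M` is a semi-transitive orientation of `M`;
in particular, `M` is word-representable. -/
theorem graphM_semi_transitive_word_representable :
    IsOrientation graphM orientM ∧ SemiTransitive orientM ∧ WordRepresentable graphM :=
  ⟨⟨(by decide : ∀ x y : Fin 9, (x, y) ∈ arcsM → (y, x) ∉ arcsM), graphM_adj_iff⟩,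
    ⟨digraphAcyclic_orientM, shortcutFree_orientM⟩,
    wordM, by decide, fun _ _ => alternate_wordM_iff⟩
end

section
/- Let D be a semi-transitive orientation of a finite simple graph that contains no transitively oriented induced subgraph on four or more vertices. Then the digraph obtained from D by deleting any single arc is still acyclic and shortcut-free, i.e., is a semi-transitive orientation of the graph with the corresponding edge removed. -/
/-!
A path `v 0 → ⋯ → v k` of a semi-transitive orientation `D` that is closed by the arc
`v 0 → v k` spans a transitive tournament on `k + 1` distinct vertices, so without transitively
oriented sets of four vertices it has length `k ≤ 2`. For `k ≤ 2`, every pair `i < j` is either a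
path arc or the closing arc, so any subdigraph of `D`, in particular `D` minus one arc, is
shortcut-free; acyclicity passes to subdigraphs trivially.
-/

section

variable {V : Type*} {D E : V → V → Prop}

def IsTransitivelyOriented (D : V → V → Prop) (S : Finset V) : Prop :=
  ∀ u ∈ S, ∀ v ∈ S, ∀ w ∈ S, D u v → D v w → D u w

theorem IsOrientation.deleteArc {G : SimpleGraph V} (hor : IsOrientation G D) {a b : V}
    (hab : D a b) :
    IsOrientation (G.deleteEdges {s(a, b)}) (fun u v => D u v ∧ ¬(u = a ∧ v = b)) := by
  obtain ⟨hasym, hadj⟩ := hor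
  refine ⟨fun x y hxy hyx => hasym x y hxy.1 hyx.1, fun x y => ?_⟩
  simp only [SimpleGraph.deleteEdges_adj, Set.mem_singleton_iff, Sym2.eq_iff, hadj]
  constructor
  · rintro ⟨hxy | hyx, hne⟩
    · exact Or.inl ⟨hxy, fun h => hne (Or.inl h)⟩
    · exact Or.inr ⟨hyx, fun h => hne (Or.inr h.symm)⟩
  · have hba : ¬D b a := hasym a b hab
    rintro (⟨hxy, hne⟩ | ⟨hyx, hne⟩)
    · refine ⟨Or.inl hxy, ?_⟩
      rintro (h | ⟨rfl, rfl⟩)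
      exacts [hne h, hba hxy]
    · refine ⟨Or.inr hyx, ?_⟩
      rintro (⟨rfl, rfl⟩ | h)
      exacts [hba hyx, hne h.symm]

theorem DigraphAcyclic.mono (hD : DigraphAcyclic D) (hle : ∀ x y, E x y → D x y) :
    DigraphAcyclic E :=
  fun v hv => hD v (Relation.TransGen.mono hle v v hv)

section CompletePath

variable {k : ℕ} {v : Fin (k + 1) → V}

theorem lt_of_rel_of_forall_lt_rel (hD : DigraphAcyclic D)
    (hall : ∀ i j, i < j → D (v i) (v j)) {i j : Fin (k + 1)} (hij : D (v i) (v j)) : i < j := by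
  refine lt_of_not_ge fun hji => ?_
  rcases hji.lt_or_eq with hji | rfl
  · exact hD _ (.tail (.single hij) (hall j i hji))
  · exact hD _ (.single hij)

theorem injective_of_forall_lt_rel (hD : DigraphAcyclic D)
    (hall : ∀ i j, i < j → D (v i) (v j)) : Function.Injective v := by
  intro i j hvij
  by_contra hne
  rcases lt_or_gt_of_ne hne with h | h
  · exact hD _ (.single (hvij ▸ hall i j h))
  · exact hD _ (.single (hvij ▸ hall j i h))

theorem isTransitivelyOriented_image_of_forall_lt_rel [DecidableEq V] (hD : DigraphAcyclic D)
    (hall : ∀ i j, i < j → D (v i) (v j)) :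
    IsTransitivelyOriented D (Finset.univ.image v) := by
  simp only [IsTransitivelyOriented, Finset.mem_image, Finset.mem_univ, true_and]
  rintro _ ⟨i, rfl⟩ _ ⟨j, rfl⟩ _ ⟨l, rfl⟩ hij hjl
  exact hall i l ((lt_of_rel_of_forall_lt_rel hD hall hij).trans
    (lt_of_rel_of_forall_lt_rel hD hall hjl))

end CompletePath

theorem length_le_two_of_closed_path (hst : SemiTransitive D)
    (htrans : ¬ ∃ S : Finset V, 4 ≤ S.card ∧ IsTransitivelyOriented D S)
    {k : ℕ} (v : Fin (k + 1) → V) (hpath : ∀ i : Fin k, D (v i.castSucc) (v i.succ))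
    (hclose : D (v 0) (v (Fin.last k))) : k ≤ 2 := by
  classical
  have hall := hst.2 k v hpath hclose
  by_contra! hk
  refine htrans ⟨Finset.univ.image v, ?_, isTransitivelyOriented_image_of_forall_lt_rel hst.1 hall⟩
  rw [Finset.card_image_of_injective _ (injective_of_forall_lt_rel hst.1 hall)]
  simp only [Finset.card_univ, Fintype.card_fin]
  omega

theorem Fin.exists_eq_castSucc_succ_or_eq_zero_last {k : ℕ} (hk : k ≤ 2) {i j : Fin (k + 1)}
    (hij : i < j) : (∃ l : Fin k, i = l.castSucc ∧ j = l.succ) ∨ (i = 0 ∧ j = Fin.last k) := by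
  rw [Fin.lt_def] at hij
  rcases Nat.lt_or_ge (i + 1) j with h | h
  · exact Or.inr ⟨Fin.ext (by rw [Fin.val_zero]; omega), Fin.ext (by rw [Fin.val_last]; omega)⟩
  · exact Or.inl ⟨⟨i, by omega⟩, Fin.ext rfl, Fin.ext (by simp; omega)⟩

theorem shortcutFree_of_le (hst : SemiTransitive D)
    (htrans : ¬ ∃ S : Finset V, 4 ≤ S.card ∧ IsTransitivelyOriented D S)
    (hle : ∀ x y, E x y → D x y) : ShortcutFree E := by
  intro k v hpath hclose i j hij
  have hk := length_le_two_of_closed_path hst htrans v (fun i => hle _ _ (hpath i))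
    (hle _ _ hclose)
  rcases Fin.exists_eq_castSucc_succ_or_eq_zero_last hk hij with ⟨l, rfl, rfl⟩ | ⟨rfl, rfl⟩
  exacts [hpath l, hclose]

end

theorem semi_transitive_minus_arc_general
    {V : Type*} (G : SimpleGraph V) (D : V → V → Prop)
    (hor : IsOrientation G D) (hst : SemiTransitive D)
    (htrans : ¬ ∃ S : Finset V, 4 ≤ S.card ∧
      ∀ u ∈ S, ∀ v ∈ S, ∀ w ∈ S, D u v → D v w → D u w)
    (a b : V) (hab : D a b) :
    IsOrientation (G.deleteEdges {s(a, b)}) (fun u v => D u v ∧ ¬(u = a ∧ v = b)) ∧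
    SemiTransitive (fun u v => D u v ∧ ¬(u = a ∧ v = b)) :=
  ⟨hor.deleteArc hab, hst.1.mono fun _ _ h => h.1, shortcutFree_of_le hst htrans fun _ _ h => h.1⟩

/-- Let `D` be a semi-transitive orientation of a finite simple graph `G` that contains no
transitively oriented induced subgraph on four or more vertices (a set `S` of vertices
induces a transitively oriented subgraph if whenever `u → v` and `v → w` are arcs with
`u, v, w ∈ S`, then `u → w` is an arc). Then deleting any single arc `a → b` from `D`
yields an acyclic, shortcut-free digraph, i.e. a semi-transitive orientation of the graph
`G` with the edge `{a, b}` removed. -/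
theorem semi_transitive_minus_arc
    {V : Type*} [Fintype V] (G : SimpleGraph V) (D : V → V → Prop)
    (hor : IsOrientation G D) (hst : SemiTransitive D)
    (htrans : ¬ ∃ S : Finset V, 4 ≤ S.card ∧
      ∀ u ∈ S, ∀ v ∈ S, ∀ w ∈ S, D u v → D v w → D u w)
    (a b : V) (hab : D a b) :
    IsOrientation (G.deleteEdges {s(a, b)}) (fun u v => D u v ∧ ¬(u = a ∧ v = b)) ∧
    SemiTransitive (fun u v => D u v ∧ ¬(u = a ∧ v = b)) :=
  semi_transitive_minus_arc_general G D hor hst htrans a b hab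
end
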